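/- arXiv:2511.21478 — 4 statements merged into one kernel-verified Lean document; each statement's English description precedes it below -/
import Mathlib

section
/- Let Π₀ be the probability distribution on nonempty binary trees given by Π₀(t) = 4^{−n(t)}. For every integer m ≥ 1 and all pairs (p₁,q₁), …, (p_m,q_m) of nonnegative integers, one has Π₀(⋂_{k=1}^{m} {t : X_k⁺(t) = p_k, X_k⁻(t) = q_k}) = Π₀(⋂_{k=1}^{m} {t : X̌_k⁻(t) = p_k, X̌_k⁺(t) = q_k}). (The process (X̌_k⁻, X̌_k⁺)_{k≥1} has the same law as (X_k⁺, X_k⁻)_{k≥1} under Π₀.) -/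
open scoped BigOperators

namespace VEP

/-- Whether a binary tree is nonempty (a node). -/
def isNode : BinaryTree Unit → Bool
  | BinaryTree.nil => false
  | BinaryTree.node _ _ _ => true

/-- Number of vertices of `t` with label `a` having a right child, when the root of `t`
carries label `c` (labels decrease by 1 to the left child and increase by 1 to the right). -/
def countRightAt : ℤ → ℤ → BinaryTree Unit → ℕ
  | _, _, BinaryTree.nil => 0
  | c, a, BinaryTree.node _ l r =>
      (if c = a ∧ isNode r then 1 else 0) + countRightAt (c - 1) a l + countRightAt (c + 1) a r

/-- Number of vertices of `t` with label `a` having a left child, root labelled `c`. -/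
def countLeftAt : ℤ → ℤ → BinaryTree Unit → ℕ
  | _, _, BinaryTree.nil => 0
  | c, a, BinaryTree.node _ l r =>
      (if c = a ∧ isNode l then 1 else 0) + countLeftAt (c - 1) a l + countLeftAt (c + 1) a r

/-- The weight `4^{-n(t)}` of a nonempty binary tree (and `0` for the empty tree). -/
noncomputable def weight (t : BinaryTree Unit) : ℝ :=
  if isNode t then (1 / 4 : ℝ) ^ t.numNodes else 0

/-- The probability `Π₀(S)` of a set of (nonempty) binary trees. -/
noncomputable def Pi0 (S : Set (BinaryTree Unit)) : ℝ := ∑' t : S, weight t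

/-- `X_m⁺(t)`: number of oriented edges of `t` from a vertex labelled `m-1` to a vertex
labelled `m` (the root of `t` is labelled `0`). -/
def Xp (m : ℕ) (t : BinaryTree Unit) : ℕ := countRightAt 0 ((m : ℤ) - 1) t

/-- `X_m⁻(t)`: number of oriented edges of `t` from a vertex labelled `m` to a vertex
labelled `m-1`. -/
def Xm (m : ℕ) (t : BinaryTree Unit) : ℕ := countLeftAt 0 (m : ℤ) t

/-- `X̌_m⁺(t)`: number of oriented edges of `t` from a vertex labelled `-m` to a vertex
labelled `-m+1`. -/
def Xcp (m : ℕ) (t : BinaryTree Unit) : ℕ := countRightAt 0 (-(m : ℤ)) t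

/-- `X̌_m⁻(t)`: number of oriented edges of `t` from a vertex labelled `-m+1` to a vertex
labelled `-m`. -/
def Xcm (m : ℕ) (t : BinaryTree Unit) : ℕ := countLeftAt 0 (-(m : ℤ) + 1) t

/-- Mirror a binary tree (swap left and right children everywhere). -/
def mirror : BinaryTree Unit → BinaryTree Unit
  | BinaryTree.nil => BinaryTree.nil
  | BinaryTree.node v l r => BinaryTree.node v (mirror r) (mirror l)

lemma mirror_mirror (t : BinaryTree Unit) : mirror (mirror t) = t := by
  induction t with
  | nil => rfl
  | node v l r ihl ihr => simp [mirror, ihl, ihr]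

lemma isNode_mirror (t : BinaryTree Unit) : isNode (mirror t) = isNode t := by
  cases t <;> rfl

lemma numNodes_mirror (t : BinaryTree Unit) : (mirror t).numNodes = t.numNodes := by
  induction t with
  | nil => rfl
  | node v l r ihl ihr => simp [mirror, BinaryTree.numNodes, ihl, ihr]; omega

lemma weight_mirror (t : BinaryTree Unit) : weight (mirror t) = weight t := by
  simp [weight, isNode_mirror, numNodes_mirror]

lemma countLeft_mirror : ∀ (c a : ℤ) (t : BinaryTree Unit),
    countLeftAt (-c) (-a) (mirror t) = countRightAt c a t := by
  intro c a t
  induction t generalizing c with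
  | nil => rfl
  | node v l r ihl ihr =>
      have h1 : -c - 1 = -(c + 1) := by ring
      have h2 : -c + 1 = -(c - 1) := by ring
      simp only [mirror, countLeftAt, countRightAt, h1, h2, ihl, ihr, isNode_mirror,
        neg_inj]
      omega

lemma countRight_mirror : ∀ (c a : ℤ) (t : BinaryTree Unit),
    countRightAt (-c) (-a) (mirror t) = countLeftAt c a t := by
  intro c a t
  induction t generalizing c with
  | nil => rfl
  | node v l r ihl ihr =>
      have h1 : -c - 1 = -(c + 1) := by ring
      have h2 : -c + 1 = -(c - 1) := by ring
      simp only [mirror, countLeftAt, countRightAt, h1, h2, ihl, ihr, isNode_mirror,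
        neg_inj]
      omega

lemma Xcm_mirror (k : ℕ) (t : BinaryTree Unit) : Xcm k (mirror t) = Xp k t := by
  have := countLeft_mirror 0 ((k : ℤ) - 1) t
  have h : -((k : ℤ) - 1) = -(k:ℤ) + 1 := by ring
  rw [h] at this
  simpa [Xcm, Xp] using this

lemma Xcp_mirror (k : ℕ) (t : BinaryTree Unit) : Xcp k (mirror t) = Xm k t := by
  have := countRight_mirror 0 (k : ℤ) t
  simpa [Xcp, Xm] using this

lemma Xp_mirror (k : ℕ) (t : BinaryTree Unit) : Xp k (mirror t) = Xcm k t := by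
  rw [← Xcm_mirror k (mirror t), mirror_mirror]

lemma Xm_mirror (k : ℕ) (t : BinaryTree Unit) : Xm k (mirror t) = Xcp k t := by
  rw [← Xcp_mirror k (mirror t), mirror_mirror]

/-- Under `Π₀`, the process `(X̌_k⁻, X̌_k⁺)_{k ≥ 1}` has the same law as `(X_k⁺, X_k⁻)_{k ≥ 1}`. -/
theorem symmetry_in_law (m : ℕ) (hm : 1 ≤ m) (P Q : ℕ → ℕ) :
    Pi0 {t | ∀ k, 1 ≤ k → k ≤ m → (Xp k t = P k ∧ Xm k t = Q k)}
    = Pi0 {t | ∀ k, 1 ≤ k → k ≤ m → (Xcm k t = P k ∧ Xcp k t = Q k)} := by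
  set S1 : Set (BinaryTree Unit) := {t | ∀ k, 1 ≤ k → k ≤ m → (Xp k t = P k ∧ Xm k t = Q k)}
  set S2 : Set (BinaryTree Unit) := {t | ∀ k, 1 ≤ k → k ≤ m → (Xcm k t = P k ∧ Xcp k t = Q k)}
  let e : S1 ≃ S2 :=
    { toFun := fun t => ⟨mirror t.1, fun k hk1 hk2 => by
        have := t.2 k hk1 hk2
        exact ⟨by rw [Xcm_mirror]; exact this.1, by rw [Xcp_mirror]; exact this.2⟩⟩
      invFun := fun t => ⟨mirror t.1, fun k hk1 hk2 => by
        have := t.2 k hk1 hk2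
        exact ⟨by rw [Xp_mirror]; exact this.1, by rw [Xm_mirror]; exact this.2⟩⟩
      left_inv := fun t => Subtype.ext (mirror_mirror t.1)
      right_inv := fun t => Subtype.ext (mirror_mirror t.1) }
  unfold Pi0
  rw [← Equiv.tsum_eq e (fun t : S2 => weight t.1)]
  refine tsum_congr fun t => ?_
  show weight t.1 = weight (mirror t.1)
  exact (weight_mirror t.1).symm

end VEP
end

section
/- Let G : [0,1] → [0,1] be a measurable function satisfying G(z) = 2 / (4 − z − G(G(z))) for every z ∈ [0,1]. Then G(0) = 5/8 and, for every z ∈ (0,1], G(z) = (−2z² + 9z − 4 + 2·√(4−z)·(1−z)^{3/2}) / (z(4−z)). -/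
namespace VEP

open Set Real

/-- The explicit solution. -/
noncomputable def gf (z : ℝ) : ℝ :=
  if z = 0 then 5/8 else
    (-2*z^2 + 9*z - 4 + 2*Real.sqrt (4-z) * (1-z)^((3:ℝ)/2)) / (z*(4-z))

lemma rpow_three_halves (w : ℝ) (hw : 0 ≤ w) : w ^ ((3:ℝ)/2) = w * Real.sqrt w := by
  rcases eq_or_lt_of_le hw with h|h
  · rw [← h]; rw [Real.zero_rpow (by norm_num)]; simp
  · have : ((3:ℝ)/2) = 1 + 1/2 := by norm_num
    rw [this, Real.rpow_add h, Real.rpow_one, Real.sqrt_eq_rpow]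

lemma gf_eq (z a b : ℝ) (hz : 0 < z) (hz1 : z ≤ 1)
    (ha2 : a^2 = 4 - z) (hb2 : b^2 = 1 - z) (ha : 0 ≤ a) (hb : 0 ≤ b) :
    gf z = ((2*z-1)*a + 2*b^3) / (z*a) := by
  have ha' : 0 < a := by nlinarith
  have h1 : Real.sqrt (4-z) = a := by rw [← ha2, Real.sqrt_sq ha]
  have h2 : Real.sqrt (1-z) = b := by rw [← hb2, Real.sqrt_sq hb]
  have h3 : (1-z)^((3:ℝ)/2) = b^3 := by
    rw [rpow_three_halves _ (by linarith), h2, ← hb2]; ring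
  rw [gf, if_neg (ne_of_gt hz), h1, h3]
  rw [div_eq_div_iff (by nlinarith : (z*(4-z)) ≠ 0) (by positivity : z*a ≠ 0)]
  linear_combination (2*z*b^3) * ha2

lemma gf_of_ne (w : ℝ) (hw : w ≠ 0) :
    gf w = (-2*w^2 + 9*w - 4 + 2*Real.sqrt (4-w) * (1-w)^((3:ℝ)/2)) / (w*(4-w)) := by
  rw [gf, if_neg hw]

lemma gf_key (z : ℝ) (hz : 0 < z) (hz1 : z ≤ 1) :
    0 < gf z ∧ gf z ≤ 1 ∧ gf (gf z) = 4 - z - 2 / gf z := by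
  set a := Real.sqrt (4-z) with hadef
  set b := Real.sqrt (1-z) with hbdef
  have ha2 : a^2 = 4 - z := Real.sq_sqrt (by linarith)
  have hb2 : b^2 = 1 - z := Real.sq_sqrt (by linarith)
  have ha : 0 ≤ a := Real.sqrt_nonneg _
  have hb : 0 ≤ b := Real.sqrt_nonneg _
  have ha' : 0 < a := by nlinarith
  have hy : gf z = ((2*z-1)*a + 2*b^3) / (z*a) := gf_eq z a b hz hz1 ha2 hb2 ha hb
  have hza : z*a ≠ 0 := by positivity
  have hb3 : (b^3)^2 = (1-z)^3 := by
    linear_combination (b^4 + b^2*(1-z) + (1-z)^2) * hb2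
  have hNpos : 0 < (2*z-1)*a + 2*b^3 := by
    rcases le_or_gt z (1/2) with h|h
    · by_contra hcon
      push_neg at hcon
      have h1 : 2*b^3 ≤ (1-2*z)*a := by linarith
      have h2 : (2*b^3)*(2*b^3) ≤ ((1-2*z)*a)*((1-2*z)*a) :=
        mul_self_le_mul_self (by positivity) h1
      have h3 : (2*b^3)*(2*b^3) = 4*(1-z)^3 := by linear_combination 4*hb3
      have h4 : ((1-2*z)*a)*((1-2*z)*a) = (1-2*z)^2*(4-z) := by linear_combination (1-2*z)^2 * ha2
      nlinarith [mul_pos hz (by linarith : (0:ℝ) < 5-8*z)]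
    · nlinarith [pow_nonneg hb 3, mul_pos (by linarith : (0:ℝ) < 2*z-1) ha']
  have hy0 : 0 < gf z := by rw [hy]; positivity
  have ha2b : 0 ≤ a - 2*b := by nlinarith [mul_nonneg hb hb]
  have h1y : 1 - gf z = b^2*(a-2*b)/(z*a) := by
    rw [hy, eq_div_iff hza, sub_mul, div_mul_cancel₀ _ hza]
    linear_combination (-a) * hb2
  have hy1 : gf z ≤ 1 := by
    have : 0 ≤ b^2*(a-2*b)/(z*a) := by positivity
    linarith [h1y ▸ this]
  have h4y : 4 - gf z = ((2*z+1)*a - 2*b^3)/(z*a) := by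
    rw [hy, eq_div_iff hza, sub_mul, div_mul_cancel₀ _ hza]; ring
  have habz : a*b ≤ z + 2 := by nlinarith [mul_nonneg ha hb]
  have h1ynn : 0 ≤ 1 - gf z := by linarith
  have h4ynn : 0 ≤ 4 - gf z := by linarith
  have hsq1 : Real.sqrt ((4-gf z)*(1-gf z)) = b*(z+2-a*b)/(z*a) := by
    have e : (4-gf z)*(1-gf z) = (b*(z+2-a*b)/(z*a))^2 := by
      rw [h1y, h4y, div_mul_div_comm, div_pow]
      congr 1
      · linear_combination (b^2 - b^4 + 2*z*b^2) * ha2 + (4*b^4 - 2*a*b^3 - 3*z*b^2) * hb2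
      · ring
    rw [e, Real.sqrt_sq (div_nonneg (mul_nonneg hb (by linarith)) (by positivity))]
  have hsq : Real.sqrt (4-gf z) * (1-gf z)^((3:ℝ)/2)
      = b^3*(a-2*b)*(z+2-a*b)/(z^2*a^2) := by
    rw [rpow_three_halves _ h1ynn]
    calc Real.sqrt (4-gf z) * ((1-gf z) * Real.sqrt (1-gf z))
        = (1-gf z) * (Real.sqrt (4-gf z) * Real.sqrt (1-gf z)) := by ring
      _ = (1-gf z) * Real.sqrt ((4-gf z)*(1-gf z)) := by rw [← Real.sqrt_mul h4ynn]
      _ = (b^2*(a-2*b)/(z*a)) * (b*(z+2-a*b)/(z*a)) := by rw [hsq1, h1y]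
      _ = b^3*(a-2*b)*(z+2-a*b)/(z^2*a^2) := by ring
  have hN : gf z * (z*a) = (2*z-1)*a + 2*b^3 := by
    rw [hy, div_mul_cancel₀ _ hza]
  have MAIN : (-2*(gf z)^2 + 9*(gf z) - 4)*(z^2*a^2) + 2*(b^3*(a-2*b)*(z+2-a*b))
      = ((4-z)*(gf z)-2)*(4-(gf z))*(z^2*a^2) := by
    linear_combination (4*b^3 - 2*a - 2*z*b^3 - 4*z*a + 2*z^2*a + 2*(gf z)*z*a - (gf z)*z^2*a) * hN
      + (2 - 2*b^4 - 6*z^2 + 4*z^3) * ha2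
      + (-8 - 8*b^2 + 8*b^4 + 4*a*b^3 - 6*z - 14*z*b^2 - 4*z*b^4 + 18*z^2 + 4*z^2*b^2 - 4*z^3) * hb2
  refine ⟨hy0, hy1, ?_⟩
  have hyne : gf z ≠ 0 := ne_of_gt hy0
  have hprod : gf z * (4 - gf z) ≠ 0 := mul_ne_zero hyne (by linarith : (4:ℝ) - gf z ≠ 0)
  rw [gf_of_ne _ hyne, mul_assoc 2, hsq]
  have hzne : z ≠ 0 := ne_of_gt hz
  have hane : a ≠ 0 := ne_of_gt ha'
  have h4ne : (4:ℝ) - gf z ≠ 0 := by linarith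
  field_simp
  linear_combination MAIN

/-! ### Solutions of the functional equation -/

def Sol (F : ℝ → ℝ) : Prop :=
  ∀ z ∈ Icc (0:ℝ) 1, F z ∈ Icc (0:ℝ) 1 ∧ F z = 2/(4 - z - F (F z))

lemma Sol.half {F : ℝ → ℝ} (hF : Sol F) {z : ℝ} (hz : z ∈ Icc (0:ℝ) 1) :
    1/2 ≤ F z ∧ F z ≤ 1 := by
  obtain ⟨hm, hfe⟩ := hF z hz
  obtain ⟨hm2, -⟩ := hF (F z) hm
  rw [Set.mem_Icc] at hm2
  rw [Set.mem_Icc] at hz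
  have hd : (0:ℝ) < 4 - z - F (F z) := by linarith
  rw [hfe]
  constructor
  · rw [le_div_iff₀ hd]; linarith
  · rw [div_le_one hd]; linarith

lemma Sol.mem01 {F : ℝ → ℝ} (hF : Sol F) {z : ℝ} (hz : z ∈ Icc (0:ℝ) 1) :
    F z ∈ Icc (0:ℝ) 1 := (hF z hz).1

lemma Sol.fe {F : ℝ → ℝ} (hF : Sol F) {z : ℝ} (hz : z ∈ Icc (0:ℝ) 1) :
    F z = 2/(4 - z - F (F z)) := (hF z hz).2

lemma two_div_le_two_div {d e : ℝ} (h0 : 0 < e) (h : e ≤ d) : 2/d ≤ 2/e := by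
  rw [div_le_div_iff₀ (by linarith) h0]; linarith

lemma div_le_div_left' {a b c : ℝ} (ha : 0 ≤ a) (hc : 0 < c) (h : c ≤ b) : a/b ≤ a/c := by
  rw [div_le_div_iff₀ (by linarith) hc]
  nlinarith

/-! ### The approximation scheme -/

def Good (F : ℝ → ℝ) : Prop :=
  (∀ z ∈ Icc (0:ℝ) 1, F z ∈ Icc (1/2:ℝ) 1) ∧ MonotoneOn F (Icc (0:ℝ) 1) ∧
    (∀ x ∈ Icc (0:ℝ) 1, ∀ y ∈ Icc (0:ℝ) 1, |F x - F y| ≤ |x - y|)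

lemma half_sub : Icc (1/2:ℝ) 1 ⊆ Icc (0:ℝ) 1 := Set.Icc_subset_Icc (by norm_num) le_rfl

lemma Good.phi {F : ℝ → ℝ} (h : Good F) :
    Good (fun z => 2/(4 - z - F (F z))) := by
  obtain ⟨hmem, hmono, hlip⟩ := h
  have mem01 : ∀ t ∈ Icc (0:ℝ) 1, F t ∈ Icc (0:ℝ) 1 := fun t ht => half_sub (hmem t ht)
  have hFF : ∀ t ∈ Icc (0:ℝ) 1, F (F t) ∈ Icc (1/2:ℝ) 1 := fun t ht =>
    hmem _ (mem01 t ht)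
  have hd : ∀ t ∈ Icc (0:ℝ) 1, 2 ≤ 4 - t - F (F t) ∧ 4 - t - F (F t) ≤ 4 := by
    intro t ht
    rw [Set.mem_Icc] at ht
    have h2 := hFF t (Set.mem_Icc.mpr ht)
    rw [Set.mem_Icc] at h2
    constructor <;> linarith
  refine ⟨?_, ?_, ?_⟩
  · intro t ht
    obtain ⟨h1, h2⟩ := hd t ht
    rw [Set.mem_Icc]
    constructor
    · rw [le_div_iff₀ (by linarith)]; linarith
    · rw [div_le_one (by linarith)]; linarith
  · intro x hx y hy hxy
    have h1 : F x ≤ F y := hmono hx hy hxy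
    have h2 : F (F x) ≤ F (F y) := hmono (mem01 x hx) (mem01 y hy) h1
    have h3 : 4 - y - F (F y) ≤ 4 - x - F (F x) := by linarith
    exact two_div_le_two_div (by linarith [(hd y hy).1]) h3
  · intro x hx y hy
    have hdx := hd x hx
    have hdy := hd y hy
    have hdxne : (4 - x - F (F x)) ≠ 0 := by linarith [hdx.1]
    have hdyne : (4 - y - F (F y)) ≠ 0 := by linarith [hdy.1]
    have heq : 2/(4 - x - F (F x)) - 2/(4 - y - F (F y))
        = 2*((4 - y - F (F y)) - (4 - x - F (F x)))
          / ((4 - x - F (F x))*(4 - y - F (F y))) := by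
      field_simp
    have habs : |(4 - y - F (F y)) - (4 - x - F (F x))| ≤ 2*|x - y| := by
      have e1 : (4 - y - F (F y)) - (4 - x - F (F x)) = (x - y) + (F (F x) - F (F y)) := by
        ring
      rw [e1]
      have e2 : |F (F x) - F (F y)| ≤ |x - y| :=
        (hlip _ (mem01 x hx) _ (mem01 y hy)).trans (hlip x hx y hy)
      calc |(x - y) + (F (F x) - F (F y))| ≤ |x - y| + |F (F x) - F (F y)| := abs_add_le _ _
        _ ≤ 2*|x - y| := by linarith
    have hprod : (4:ℝ) ≤ (4 - x - F (F x))*(4 - y - F (F y)) := by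
      nlinarith [hdx.1, hdy.1]
    calc |2/(4 - x - F (F x)) - 2/(4 - y - F (F y))|
        = |2*((4 - y - F (F y)) - (4 - x - F (F x)))|
          / |(4 - x - F (F x))*(4 - y - F (F y))| := by rw [heq, abs_div]
      _ ≤ |2*((4 - y - F (F y)) - (4 - x - F (F x)))| / 4 := by
          apply div_le_div_left' (abs_nonneg _) (by norm_num)
          rw [abs_of_pos (by nlinarith [hdx.1, hdy.1] : (0:ℝ) < (4 - x - F (F x))*(4 - y - F (F y)))]
          exact hprod
      _ = |(4 - y - F (F y)) - (4 - x - F (F x))| / 2 := by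
          rw [abs_mul, abs_of_nonneg (by norm_num : (0:ℝ) ≤ 2)]; ring
      _ ≤ (2*|x - y|)/2 := by
          apply div_le_div_of_nonneg_right habs (by norm_num)
      _ = |x - y| := by ring

noncomputable def LL : ℕ → ℝ → ℝ
  | 0 => fun _ => 1/2
  | n+1 => fun z => 2/(4 - z - LL n (LL n z))

noncomputable def UU : ℕ → ℝ → ℝ
  | 0 => fun _ => 1
  | n+1 => fun z => 2/(4 - z - UU n (UU n z))

lemma LL_good : ∀ n, Good (LL n) := by
  intro n
  induction n with
  | zero =>
    refine ⟨fun z hz => Set.mem_Icc.mpr (by simp [LL]; norm_num), monotoneOn_const, fun x _ y _ => by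
      simp [LL]⟩
  | succ n ih => exact ih.phi

lemma UU_good : ∀ n, Good (UU n) := by
  intro n
  induction n with
  | zero =>
    refine ⟨fun z hz => Set.mem_Icc.mpr (by simp [UU]; norm_num), monotoneOn_const, fun x _ y _ => by
      simp [UU]⟩
  | succ n ih => exact ih.phi

lemma LL_le_sol {K : ℝ → ℝ} (hK : Sol K) :
    ∀ n, ∀ z ∈ Icc (0:ℝ) 1, LL n z ≤ K z := by
  intro n
  induction n with
  | zero => intro z hz; exact (hK.half hz).1
  | succ n ih =>
    intro z hz
    have hKz := hK.mem01 hz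
    have hLz : LL n z ∈ Icc (0:ℝ) 1 := half_sub ((LL_good n).1 z hz)
    have h1 : LL n (LL n z) ≤ LL n (K z) :=
      (LL_good n).2.1 hLz hKz (ih z hz)
    have h2 : LL n (K z) ≤ K (K z) := ih (K z) hKz
    have h3 : LL n (LL n z) ≤ K (K z) := h1.trans h2
    rw [hK.fe hz]
    show 2/(4 - z - LL n (LL n z)) ≤ 2/(4 - z - K (K z))
    have hK2 := hK.mem01 hKz
    rw [Set.mem_Icc] at hK2
    rw [Set.mem_Icc] at hz
    exact two_div_le_two_div (by linarith) (by linarith)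

lemma sol_le_UU {K : ℝ → ℝ} (hK : Sol K) :
    ∀ n, ∀ z ∈ Icc (0:ℝ) 1, K z ≤ UU n z := by
  intro n
  induction n with
  | zero => intro z hz; exact (hK.half hz).2
  | succ n ih =>
    intro z hz
    have hKz := hK.mem01 hz
    have hUz : UU n z ∈ Icc (0:ℝ) 1 := half_sub ((UU_good n).1 z hz)
    have h1 : K (K z) ≤ UU n (K z) := ih (K z) hKz
    have h2 : UU n (K z) ≤ UU n (UU n z) :=
      (UU_good n).2.1 hKz hUz (ih z hz)
    have h3 : K (K z) ≤ UU n (UU n z) := h1.trans h2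
    rw [hK.fe hz]
    show 2/(4 - z - K (K z)) ≤ 2/(4 - z - UU n (UU n z))
    have hU2 := (UU_good n).1 _ hUz
    rw [Set.mem_Icc] at hU2
    rw [Set.mem_Icc] at hz
    exact two_div_le_two_div (by linarith) (by linarith)

lemma LL_chain : ∀ n, ∀ z ∈ Icc (0:ℝ) 1, LL n z ≤ LL (n+1) z := by
  intro n
  induction n with
  | zero =>
    intro z hz
    rw [Set.mem_Icc] at hz
    show (1:ℝ)/2 ≤ 2/(4 - z - 1/2)
    rw [le_div_iff₀ (by linarith)]
    linarith
  | succ n ih =>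
    intro z hz
    have hLz : LL n z ∈ Icc (0:ℝ) 1 := half_sub ((LL_good n).1 z hz)
    have hLz' : LL (n+1) z ∈ Icc (0:ℝ) 1 := half_sub ((LL_good (n+1)).1 z hz)
    have h1 : LL n (LL n z) ≤ LL n (LL (n+1) z) :=
      (LL_good n).2.1 hLz hLz' (ih z hz)
    have h2 : LL n (LL (n+1) z) ≤ LL (n+1) (LL (n+1) z) := ih _ hLz'
    show 2/(4 - z - LL n (LL n z)) ≤ 2/(4 - z - LL (n+1) (LL (n+1) z))
    have hb := (LL_good (n+1)).1 _ hLz'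
    rw [Set.mem_Icc] at hb
    rw [Set.mem_Icc] at hz
    exact two_div_le_two_div (by linarith) (by linarith)

lemma UU_chain : ∀ n, ∀ z ∈ Icc (0:ℝ) 1, UU (n+1) z ≤ UU n z := by
  intro n
  induction n with
  | zero =>
    intro z hz
    rw [Set.mem_Icc] at hz
    show 2/(4 - z - 1) ≤ (1:ℝ)
    rw [div_le_one (by linarith)]
    linarith
  | succ n ih =>
    intro z hz
    have hUz : UU n z ∈ Icc (0:ℝ) 1 := half_sub ((UU_good n).1 z hz)
    have hUz' : UU (n+1) z ∈ Icc (0:ℝ) 1 := half_sub ((UU_good (n+1)).1 z hz)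
    have h1 : UU (n+1) (UU (n+1) z) ≤ UU n (UU (n+1) z) := ih _ hUz'
    have h2 : UU n (UU (n+1) z) ≤ UU n (UU n z) :=
      (UU_good n).2.1 hUz' hUz (ih z hz)
    show 2/(4 - z - UU (n+1) (UU (n+1) z)) ≤ 2/(4 - z - UU n (UU n z))
    have hb := (UU_good n).1 _ hUz
    rw [Set.mem_Icc] at hb
    rw [Set.mem_Icc] at hz
    exact two_div_le_two_div (by linarith) (by linarith)

noncomputable def Ls (z : ℝ) : ℝ := ⨆ n, LL n z
noncomputable def Us (z : ℝ) : ℝ := ⨅ n, UU n z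

section LsUs

variable {z : ℝ}

lemma LL_bddAbove (hz : z ∈ Icc (0:ℝ) 1) : BddAbove (Set.range fun n => LL n z) := by
  refine ⟨1, ?_⟩
  rintro x ⟨n, rfl⟩
  exact ((LL_good n).1 z hz).2

lemma UU_bddBelow (hz : z ∈ Icc (0:ℝ) 1) : BddBelow (Set.range fun n => UU n z) := by
  refine ⟨0, ?_⟩
  rintro x ⟨n, rfl⟩
  exact (half_sub ((UU_good n).1 z hz)).1

lemma LL_le_Ls (hz : z ∈ Icc (0:ℝ) 1) (n : ℕ) : LL n z ≤ Ls z :=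
  le_ciSup (LL_bddAbove hz) n

lemma Ls_le (hz : z ∈ Icc (0:ℝ) 1) {c : ℝ} (h : ∀ n, LL n z ≤ c) : Ls z ≤ c :=
  ciSup_le h

lemma Us_le_UU (hz : z ∈ Icc (0:ℝ) 1) (n : ℕ) : Us z ≤ UU n z :=
  ciInf_le (UU_bddBelow hz) n

lemma le_Us (hz : z ∈ Icc (0:ℝ) 1) {c : ℝ} (h : ∀ n, c ≤ UU n z) : c ≤ Us z :=
  le_ciInf h

lemma Ls_mem (hz : z ∈ Icc (0:ℝ) 1) : Ls z ∈ Icc (1/2:ℝ) 1 := by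
  rw [Set.mem_Icc]
  constructor
  · have := LL_le_Ls hz 0
    simpa [LL] using this
  · exact Ls_le hz fun n => ((LL_good n).1 z hz).2

lemma Us_mem (hz : z ∈ Icc (0:ℝ) 1) : Us z ∈ Icc (1/2:ℝ) 1 := by
  rw [Set.mem_Icc]
  constructor
  · exact le_Us hz fun n => ((UU_good n).1 z hz).1
  · have := Us_le_UU hz 0
    simpa [UU] using this

lemma tendsto_Ls (hz : z ∈ Icc (0:ℝ) 1) :
    Filter.Tendsto (fun n => LL n z) Filter.atTop (nhds (Ls z)) :=
  tendsto_atTop_ciSup (monotone_nat_of_le_succ fun n => LL_chain n z hz) (LL_bddAbove hz)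

lemma tendsto_Us (hz : z ∈ Icc (0:ℝ) 1) :
    Filter.Tendsto (fun n => UU n z) Filter.atTop (nhds (Us z)) :=
  tendsto_atTop_ciInf (antitone_nat_of_succ_le fun n => UU_chain n z hz) (UU_bddBelow hz)

end LsUs

lemma Ls_mono : MonotoneOn Ls (Icc (0:ℝ) 1) := by
  intro x hx y hy hxy
  refine Ls_le hx fun n => ?_
  exact ((LL_good n).2.1 hx hy hxy).trans (LL_le_Ls hy n)

lemma Us_mono : MonotoneOn Us (Icc (0:ℝ) 1) := by
  intro x hx y hy hxy
  refine le_Us hy fun n => ?_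
  exact (Us_le_UU hx n).trans ((UU_good n).2.1 hx hy hxy)

lemma Ls_lip : ∀ x ∈ Icc (0:ℝ) 1, ∀ y ∈ Icc (0:ℝ) 1, |Ls x - Ls y| ≤ |x - y| := by
  have key : ∀ x ∈ Icc (0:ℝ) 1, ∀ y ∈ Icc (0:ℝ) 1, Ls x - Ls y ≤ |x - y| := by
    intro x hx y hy
    have h : Ls x ≤ Ls y + |x - y| := by
      refine Ls_le hx fun n => ?_
      have h1 := (LL_good n).2.2 x hx y hy
      have h2 := LL_le_Ls hy n
      have := abs_sub_le_iff.mp h1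
      linarith [this.1]
    linarith
  intro x hx y hy
  rw [abs_sub_le_iff]
  constructor
  · exact key x hx y hy
  · rw [abs_sub_comm]
    exact key y hy x hx

lemma Us_lip : ∀ x ∈ Icc (0:ℝ) 1, ∀ y ∈ Icc (0:ℝ) 1, |Us x - Us y| ≤ |x - y| := by
  have key : ∀ x ∈ Icc (0:ℝ) 1, ∀ y ∈ Icc (0:ℝ) 1, Us x - Us y ≤ |x - y| := by
    intro x hx y hy
    have h : Us x - |x - y| ≤ Us y := by
      refine le_Us hy fun n => ?_
      have h1 := (UU_good n).2.2 x hx y hy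
      have h2 := Us_le_UU hx n
      have h3 := abs_sub_le_iff.mp h1
      linarith [h3.1]
    linarith
  intro x hx y hy
  rw [abs_sub_le_iff]
  constructor
  · exact key x hx y hy
  · rw [abs_sub_comm]
    exact key y hy x hx

open Filter in
lemma Ls_sol : Sol Ls := by
  intro z hz
  have hLz : Ls z ∈ Icc (0:ℝ) 1 := half_sub (Ls_mem hz)
  refine ⟨hLz, ?_⟩
  have h1 := tendsto_Ls hz
  have h2 := tendsto_Ls hLz
  have h3 : Tendsto (fun n => LL n (LL n z)) atTop (nhds (Ls (Ls z))) := by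
    rw [← tendsto_sub_nhds_zero_iff]
    apply squeeze_zero_norm (a := fun n => |LL n z - Ls z| + |LL n (Ls z) - Ls (Ls z)|)
    · intro n
      have hLn : LL n z ∈ Icc (0:ℝ) 1 := half_sub ((LL_good n).1 z hz)
      have e1 : |LL n (LL n z) - LL n (Ls z)| ≤ |LL n z - Ls z| :=
        (LL_good n).2.2 _ hLn _ hLz
      calc ‖LL n (LL n z) - Ls (Ls z)‖
          = |LL n (LL n z) - Ls (Ls z)| := rfl
        _ ≤ |LL n (LL n z) - LL n (Ls z)| + |LL n (Ls z) - Ls (Ls z)| := abs_sub_le _ _ _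
        _ ≤ |LL n z - Ls z| + |LL n (Ls z) - Ls (Ls z)| := by linarith
    · have t1 : Tendsto (fun n => |LL n z - Ls z|) atTop (nhds 0) := by
        have := (h1.sub_const (Ls z)).abs
        simpa using this
      have t2 : Tendsto (fun n => |LL n (Ls z) - Ls (Ls z)|) atTop (nhds 0) := by
        have := (h2.sub_const (Ls (Ls z))).abs
        simpa using this
      simpa using t1.add t2
  have hden : (4:ℝ) - z - Ls (Ls z) ≠ 0 := by
    have := (Ls_mem hLz).2
    rw [Set.mem_Icc] at hz
    have : Ls (Ls z) ≤ 1 := (Ls_mem hLz).2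
    linarith [hz.2]
  have h4 : Tendsto (fun n => 2/(4 - z - LL n (LL n z))) atTop
      (nhds (2/(4 - z - Ls (Ls z)))) := by
    apply Tendsto.div tendsto_const_nhds
    · exact Tendsto.sub tendsto_const_nhds h3
    · exact hden
  have h5 : Tendsto (fun n => LL (n+1) z) atTop (nhds (Ls z)) :=
    h1.comp (tendsto_add_atTop_nat 1)
  have h6 : Tendsto (fun n => LL (n+1) z) atTop (nhds (2/(4 - z - Ls (Ls z)))) := h4
  exact tendsto_nhds_unique h5 h6

open Filter in
lemma Us_sol : Sol Us := by
  intro z hz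
  have hUz : Us z ∈ Icc (0:ℝ) 1 := half_sub (Us_mem hz)
  refine ⟨hUz, ?_⟩
  have h1 := tendsto_Us hz
  have h2 := tendsto_Us hUz
  have h3 : Tendsto (fun n => UU n (UU n z)) atTop (nhds (Us (Us z))) := by
    rw [← tendsto_sub_nhds_zero_iff]
    apply squeeze_zero_norm (a := fun n => |UU n z - Us z| + |UU n (Us z) - Us (Us z)|)
    · intro n
      have hUn : UU n z ∈ Icc (0:ℝ) 1 := half_sub ((UU_good n).1 z hz)
      have e1 : |UU n (UU n z) - UU n (Us z)| ≤ |UU n z - Us z| :=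
        (UU_good n).2.2 _ hUn _ hUz
      calc ‖UU n (UU n z) - Us (Us z)‖
          = |UU n (UU n z) - Us (Us z)| := rfl
        _ ≤ |UU n (UU n z) - UU n (Us z)| + |UU n (Us z) - Us (Us z)| := abs_sub_le _ _ _
        _ ≤ |UU n z - Us z| + |UU n (Us z) - Us (Us z)| := by linarith
    · have t1 : Tendsto (fun n => |UU n z - Us z|) atTop (nhds 0) := by
        have := (h1.sub_const (Us z)).abs
        simpa using this
      have t2 : Tendsto (fun n => |UU n (Us z) - Us (Us z)|) atTop (nhds 0) := by
        have := (h2.sub_const (Us (Us z))).abs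
        simpa using this
      simpa using t1.add t2
  have hden : (4:ℝ) - z - Us (Us z) ≠ 0 := by
    have h7 : Us (Us z) ≤ 1 := (Us_mem hUz).2
    rw [Set.mem_Icc] at hz
    linarith [hz.2]
  have h4 : Tendsto (fun n => 2/(4 - z - UU n (UU n z))) atTop
      (nhds (2/(4 - z - Us (Us z)))) := by
    apply Tendsto.div tendsto_const_nhds
    · exact Tendsto.sub tendsto_const_nhds h3
    · exact hden
  have h5 : Tendsto (fun n => UU (n+1) z) atTop (nhds (Us z)) :=
    h1.comp (tendsto_add_atTop_nat 1)
  have h6 : Tendsto (fun n => UU (n+1) z) atTop (nhds (2/(4 - z - Us (Us z)))) := h4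
  exact tendsto_nhds_unique h5 h6

lemma Ls_le_sol {K : ℝ → ℝ} (hK : Sol K) {z : ℝ} (hz : z ∈ Icc (0:ℝ) 1) :
    Ls z ≤ K z :=
  Ls_le hz fun n => LL_le_sol hK n z hz

lemma sol_le_Us {K : ℝ → ℝ} (hK : Sol K) {z : ℝ} (hz : z ∈ Icc (0:ℝ) 1) :
    K z ≤ Us z :=
  le_Us hz fun n => sol_le_UU hK n z hz

section Orbit

open Filter

variable {H : ℝ → ℝ}

lemma orbit_mem (hH : Sol H) {z : ℝ} (hz : z ∈ Icc (0:ℝ) 1) :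
    ∀ n, H^[n] z ∈ Icc (0:ℝ) 1 := by
  intro n
  induction n with
  | zero => simpa using hz
  | succ n ih =>
    rw [Function.iterate_succ_apply']
    exact hH.mem01 ih

lemma orbit_limit (hH : Sol H) {z p : ℝ} (hz : z ∈ Icc (0:ℝ) 1)
    (hp : Tendsto (fun n => H^[n] z) atTop (nhds p)) : p = 1 := by
  have horb := orbit_mem hH hz
  have key : ∀ n, (H^[n+1] z) * (4 - H^[n] z - H^[n+2] z) = 2 := by
    intro n
    have h1 := hH.fe (horb n)
    have hm1 := hH.mem01 (horb n)
    have hm2 := hH.mem01 hm1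
    rw [Set.mem_Icc] at hm2
    have hmem := horb n
    rw [Set.mem_Icc] at hmem
    have hd : (0:ℝ) < 4 - H^[n] z - H (H (H^[n] z)) := by linarith
    have e1 : H^[n+1] z = H (H^[n] z) := Function.iterate_succ_apply' H n z
    have e2 : H^[n+2] z = H (H (H^[n] z)) := by
      rw [Function.iterate_succ_apply', Function.iterate_succ_apply']
    have h2 : H (H^[n] z) * (4 - H^[n] z - H (H (H^[n] z))) = 2 := by
      nth_rewrite 1 [h1]
      rw [div_mul_cancel₀ _ (ne_of_gt hd)]
    rw [e1, e2]
    exact h2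
  have t1 : Tendsto (fun n => H^[n+1] z) atTop (nhds p) := hp.comp (tendsto_add_atTop_nat 1)
  have t2 : Tendsto (fun n => H^[n+2] z) atTop (nhds p) := hp.comp (tendsto_add_atTop_nat 2)
  have t3 : Tendsto (fun n => (H^[n+1] z) * (4 - H^[n] z - H^[n+2] z)) atTop
      (nhds (p * (4 - p - p))) :=
    t1.mul ((tendsto_const_nhds.sub hp).sub t2)
  have t4 : Tendsto (fun n => (H^[n+1] z) * (4 - H^[n] z - H^[n+2] z)) atTop
      (nhds 2) := by
    simp only [key]
    exact tendsto_const_nhds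
  have := tendsto_nhds_unique t3 t4
  nlinarith [sq_nonneg (p - 1)]

lemma sol_gt (hH : Sol H) (hmono : MonotoneOn H (Icc (0:ℝ) 1))
    {z : ℝ} (hz : z ∈ Icc (0:ℝ) 1) (hz1 : z < 1) : z < H z := by
  by_contra hcon
  push_neg at hcon
  have horb := orbit_mem hH hz
  have hanti : ∀ n, H^[n+1] z ≤ H^[n] z := by
    intro n
    induction n with
    | zero => simpa using hcon
    | succ n ih =>
      have ih' : H (H^[n] z) ≤ H^[n] z := by rwa [Function.iterate_succ_apply'] at ih
      have hm : H (H^[n] z) ∈ Icc (0:ℝ) 1 := by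
        have h5 := horb (n+1)
        rwa [Function.iterate_succ_apply'] at h5
      rw [Function.iterate_succ_apply' H (n+1), Function.iterate_succ_apply' H n]
      exact hmono hm (horb n) ih'
  have hbdd : BddBelow (Set.range fun n => H^[n] z) := by
    refine ⟨0, ?_⟩
    rintro x ⟨n, rfl⟩
    exact (Set.mem_Icc.mp (horb n)).1
  have htend := tendsto_atTop_ciInf (antitone_nat_of_succ_le hanti) hbdd
  have hp1 : (⨅ n, H^[n] z) = 1 := orbit_limit hH hz htend
  have hle : (⨅ n, H^[n] z) ≤ z := by
    have := ciInf_le hbdd 0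
    simpa using this
  rw [hp1] at hle
  linarith

lemma sol_one (hH : Sol H) (hmono : MonotoneOn H (Icc (0:ℝ) 1)) : H 1 = 1 := by
  have h1 : H 1 ≤ 1 := (hH.half (Set.mem_Icc.mpr ⟨zero_le_one, le_rfl⟩)).2
  have h2 : 1 ≤ H 1 := by
    refine le_of_forall_lt fun c hc => ?_
    rcases lt_or_ge c 0 with h|h
    · have := (hH.half (Set.mem_Icc.mpr ⟨zero_le_one, le_rfl⟩)).1
      linarith
    · have hcI : c ∈ Icc (0:ℝ) 1 := Set.mem_Icc.mpr ⟨h, le_of_lt hc⟩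
      have := sol_gt hH hmono hcI hc
      have h3 : H c ≤ H 1 := hmono hcI (Set.mem_Icc.mpr ⟨zero_le_one, le_rfl⟩) (le_of_lt hc)
      linarith
  linarith

lemma orbit_tendsto_one (hH : Sol H) (hmono : MonotoneOn H (Icc (0:ℝ) 1))
    {z : ℝ} (hz : z ∈ Icc (0:ℝ) 1) :
    Tendsto (fun n => H^[n] z) atTop (nhds 1) := by
  have horb := orbit_mem hH hz
  have hmonoseq : ∀ n, H^[n] z ≤ H^[n+1] z := by
    intro n
    rw [Function.iterate_succ_apply' H n]
    rcases lt_or_eq_of_le (Set.mem_Icc.mp (horb n)).2 with h|h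
    · exact le_of_lt (sol_gt hH hmono (horb n) h)
    · rw [h, sol_one hH hmono]
  have hbdd : BddAbove (Set.range fun n => H^[n] z) := by
    refine ⟨1, ?_⟩
    rintro x ⟨n, rfl⟩
    exact (Set.mem_Icc.mp (horb n)).2
  have htend := tendsto_atTop_ciSup (monotone_nat_of_le_succ hmonoseq) hbdd
  have := orbit_limit hH hz htend
  rwa [this] at htend

end Orbit

open Filter in
lemma Us_eq_Ls {K : ℝ → ℝ} (hK : Sol K) : ∀ z ∈ Icc (0:ℝ) 1, Us z = Ls z := by
  have hone : (1:ℝ) ∈ Icc (0:ℝ) 1 := Set.mem_Icc.mpr ⟨zero_le_one, le_rfl⟩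
  have hLsUs : ∀ w ∈ Icc (0:ℝ) 1, Ls w ≤ Us w := fun w hw =>
    (Ls_le_sol hK hw).trans (sol_le_Us hK hw)
  have hstep : ∀ w ∈ Icc (0:ℝ) 1, Us w - Ls w ≤ Us (Us w) - Ls (Us w) := by
    intro w hw
    have hu : Us w ∈ Icc (0:ℝ) 1 := half_sub (Us_mem hw)
    have hv : Ls w ∈ Icc (0:ℝ) 1 := half_sub (Ls_mem hw)
    have hwIcc := Set.mem_Icc.mp hw
    have hX : Us (Us w) ∈ Icc (0:ℝ) 1 := half_sub (Us_mem hu)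
    have hY : Ls (Ls w) ∈ Icc (0:ℝ) 1 := half_sub (Ls_mem hv)
    have hXm := Set.mem_Icc.mp hX
    have hYm := Set.mem_Icc.mp hY
    have hdU : (0:ℝ) < 4 - w - Us (Us w) := by linarith [hwIcc.2, hXm.2]
    have hdL : (0:ℝ) < 4 - w - Ls (Ls w) := by linarith [hwIcc.2, hYm.2]
    have hU2 : Us w * (4 - w - Us (Us w)) = 2 := by
      nth_rewrite 1 [Us_sol.fe hw]
      rw [div_mul_cancel₀ _ (ne_of_gt hdU)]
    have hL2 : Ls w * (4 - w - Ls (Ls w)) = 2 := by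
      nth_rewrite 1 [Ls_sol.fe hw]
      rw [div_mul_cancel₀ _ (ne_of_gt hdL)]
    have hid : Us w - Ls w = Us w * Ls w * (Us (Us w) - Ls (Ls w)) / 2 := by
      linear_combination (Ls w / 2) * hU2 - (Us w / 2) * hL2
    have hYX1 : Ls (Ls w) ≤ Ls (Us w) := Ls_mono hv hu (hLsUs w hw)
    have hYX2 : Ls (Us w) ≤ Us (Us w) := hLsUs _ hu
    have hlipL : Ls (Us w) - Ls (Ls w) ≤ Us w - Ls w := by
      have h1 := Ls_lip _ hu _ hv
      have h2 := (abs_sub_le_iff.mp h1).1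
      have h3 : |Us w - Ls w| = Us w - Ls w := abs_of_nonneg (by linarith [hLsUs w hw])
      rw [h3] at h2
      linarith
    have hum := Set.mem_Icc.mp hu
    have hvm := Set.mem_Icc.mp hv
    have huv : Us w * Ls w ≤ 1 := by nlinarith [hum.1, hum.2, hvm.1, hvm.2]
    have huv0 : 0 ≤ Us w * Ls w := mul_nonneg hum.1 hvm.1
    have hXY0 : 0 ≤ Us (Us w) - Ls (Ls w) := by linarith
    have hkey : Us w * Ls w * (Us (Us w) - Ls (Ls w)) ≤ Us (Us w) - Ls (Ls w) := by
      nlinarith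
    linarith
  intro z hz
  have hiter : ∀ n, Us z - Ls z ≤ Us (Us^[n] z) - Ls (Us^[n] z) := by
    intro n
    induction n with
    | zero => simp
    | succ n ih =>
      have ha := orbit_mem Us_sol hz n
      have h1 := hstep _ ha
      rw [Function.iterate_succ_apply' Us n z]
      linarith
  have htend1 := orbit_tendsto_one Us_sol Us_mono hz
  have hUs1 : Us 1 = 1 := sol_one Us_sol Us_mono
  have hLs1 : Ls 1 = 1 := sol_one Ls_sol Ls_mono
  have hU : Tendsto (fun n => Us (Us^[n] z)) atTop (nhds 1) := by
    rw [← tendsto_sub_nhds_zero_iff]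
    apply squeeze_zero_norm (a := fun n => |Us^[n] z - 1|)
    · intro n
      have h1 := Us_lip _ (orbit_mem Us_sol hz n) _ hone
      rw [hUs1] at h1
      simpa using h1
    · have := (htend1.sub_const 1).abs
      simpa using this
  have hL : Tendsto (fun n => Ls (Us^[n] z)) atTop (nhds 1) := by
    rw [← tendsto_sub_nhds_zero_iff]
    apply squeeze_zero_norm (a := fun n => |Us^[n] z - 1|)
    · intro n
      have h1 := Ls_lip _ (orbit_mem Us_sol hz n) _ hone
      rw [hLs1] at h1
      simpa using h1
    · have := (htend1.sub_const 1).abs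
      simpa using this
  have ht2 : Tendsto (fun n => Us (Us^[n] z) - Ls (Us^[n] z)) atTop (nhds 0) := by
    have := hU.sub hL
    simpa using this
  have hfin : Us z - Ls z ≤ 0 := ge_of_tendsto' ht2 hiter
  have := hLsUs z hz
  linarith

lemma sol_unique {K K' : ℝ → ℝ} (hK : Sol K) (hK' : Sol K') {z : ℝ}
    (hz : z ∈ Icc (0:ℝ) 1) : K z = K' z := by
  have h1 := Ls_le_sol hK hz
  have h2 := sol_le_Us hK hz
  have h3 := Ls_le_sol hK' hz
  have h4 := sol_le_Us hK' hz
  have h5 := Us_eq_Ls hK z hz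
  linarith

lemma gf_zero : gf 0 = 5/8 := by simp [gf]

lemma gf_58 : gf (5/8:ℝ) = 4/5 := by
  have hb2 : (Real.sqrt (3/8))^2 = 3/8 := Real.sq_sqrt (by norm_num)
  have ha2 : (3*Real.sqrt (3/8))^2 = 4 - 5/8 := by rw [mul_pow, hb2]; norm_num
  have hb2' : (Real.sqrt (3/8))^2 = 1 - 5/8 := by rw [hb2]; norm_num
  have hs : (0:ℝ) < Real.sqrt (3/8) := Real.sqrt_pos.mpr (by norm_num)
  have h := gf_eq (5/8) (3*Real.sqrt (3/8)) (Real.sqrt (3/8)) (by norm_num) (by norm_num)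
    ha2 hb2' (by positivity) (Real.sqrt_nonneg _)
  rw [h, div_eq_iff (by positivity)]
  linear_combination (2*Real.sqrt (3/8))*hb2

lemma gf_sol : Sol gf := by
  intro z hz
  obtain ⟨hz0, hz1⟩ := Set.mem_Icc.mp hz
  rcases eq_or_lt_of_le hz0 with h0|h0
  · rw [← h0]
    constructor
    · rw [gf_zero]
      rw [Set.mem_Icc]
      norm_num
    · rw [gf_zero, gf_58]
      norm_num
  · obtain ⟨hpos, hle, hcomp⟩ := gf_key z h0 hz1
    refine ⟨Set.mem_Icc.mpr ⟨le_of_lt hpos, hle⟩, ?_⟩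
    rw [hcomp, show 4 - z - (4 - z - 2/gf z) = 2/gf z by ring]
    field_simp

/-- Uniqueness of the measurable solution on `[0,1]` of the functional equation
`G(z) = 2 / (4 − z − G(G(z)))`: any such solution is the explicit function `g₁`. -/
theorem g1_uniqueness (G : Set.Icc (0 : ℝ) 1 → Set.Icc (0 : ℝ) 1) (hG : Measurable G)
    (hfe : ∀ z : Set.Icc (0 : ℝ) 1, (G z : ℝ) = 2 / (4 - (z : ℝ) - (G (G z) : ℝ))) :
    (G ⟨0, by norm_num⟩ : ℝ) = 5 / 8 ∧
    ∀ z : Set.Icc (0 : ℝ) 1, (0 : ℝ) < (z : ℝ) →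
      (G z : ℝ)
        = (-2 * (z : ℝ) ^ 2 + 9 * (z : ℝ) - 4
            + 2 * Real.sqrt (4 - (z : ℝ)) * (1 - (z : ℝ)) ^ ((3 : ℝ) / 2))
          / ((z : ℝ) * (4 - (z : ℝ))) := by
  classical
  set K : ℝ → ℝ := fun x => if h : x ∈ Icc (0:ℝ) 1 then (G ⟨x, h⟩ : ℝ) else 0 with hKdef
  have hKmem : ∀ (x : ℝ) (h : x ∈ Icc (0:ℝ) 1), K x = (G ⟨x,h⟩ : ℝ) := fun x h => dif_pos h
  have hKsol : Sol K := by
    intro z hz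
    rw [hKmem z hz]
    refine ⟨(G ⟨z,hz⟩).2, ?_⟩
    have h1 := hfe ⟨z, hz⟩
    have h2 : K (↑(G ⟨z,hz⟩)) = (G (G ⟨z,hz⟩) : ℝ) := by
      rw [hKmem _ (G ⟨z,hz⟩).2]
    rw [h2]
    exact h1
  have heq : ∀ z ∈ Icc (0:ℝ) 1, K z = gf z := fun z hz => sol_unique hKsol gf_sol hz
  constructor
  · have h0 : (0:ℝ) ∈ Icc (0:ℝ) 1 := Set.mem_Icc.mpr ⟨le_refl _, by norm_num⟩
    have h1 := heq 0 h0
    rw [hKmem 0 h0] at h1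
    rw [gf_zero] at h1
    exact h1
  · intro z hzpos
    have hz : (z:ℝ) ∈ Icc (0:ℝ) 1 := z.2
    have h1 := heq z hz
    rw [hKmem _ hz] at h1
    rw [Subtype.coe_eta] at h1
    rw [h1, gf_of_ne _ (ne_of_gt hzpos)]

end VEP
end

section
/- Let G : [0,1] → [0,1] be a measurable function satisfying G(z) = 3 / (6 − z − G(z) − G(G(z))) for every z ∈ [0,1]. Then G(0) = 2/3 and, for every z ∈ (0,1], G(z) = (−z² + 6z − 3 + √(9−z)·(1−z)^{3/2}) / (2z). -/
namespace VEP

set_option maxHeartbeats 1000000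

/-- Auxiliary: the explicit solution `g₂` in rationalized form,
`psi w = φ(w) - w = 4(1-w)^{3/2} / (√(9-w) + 3√(1-w))`. -/
noncomputable def psi (w : ℝ) : ℝ :=
  4 * (Real.sqrt (1 - w)) ^ 3 / (Real.sqrt (9 - w) + 3 * Real.sqrt (1 - w))

noncomputable def phi (w : ℝ) : ℝ := w + psi w

lemma sqrt9_ge (w : ℝ) (hw : w ≤ 1) : 2 ≤ Real.sqrt (9 - w) := by
  have : (2:ℝ) = Real.sqrt 4 := by
    rw [show (4:ℝ) = 2^2 by norm_num, Real.sqrt_sq (by norm_num)]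
  rw [this]
  exact Real.sqrt_le_sqrt (by linarith)

lemma sqrt9_le (w : ℝ) (hw : 0 ≤ w) : Real.sqrt (9 - w) ≤ 3 := by
  have : (3:ℝ) = Real.sqrt 9 := by
    rw [show (9:ℝ) = 3^2 by norm_num, Real.sqrt_sq (by norm_num)]
  rw [this]
  exact Real.sqrt_le_sqrt (by linarith)

lemma sqrt1_le (w : ℝ) (hw : 0 ≤ w) : Real.sqrt (1 - w) ≤ 1 := by
  have h : (1:ℝ) = Real.sqrt 1 := by simp
  nth_rewrite 2 [h]
  exact Real.sqrt_le_sqrt (by linarith)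

lemma psi_nonneg (w : ℝ) (hw : w ≤ 1) : 0 ≤ psi w := by
  have h2 := sqrt9_ge w hw
  have h0 := Real.sqrt_nonneg (1 - w)
  apply div_nonneg (by positivity)
  linarith

lemma psi_le (w : ℝ) (hw0 : 0 ≤ w) (hw1 : w ≤ 1) : psi w ≤ 1 - w := by
  set t := Real.sqrt (1 - w) with ht
  set A := Real.sqrt (9 - w) with hA
  have ht2 : t ^ 2 = 1 - w := Real.sq_sqrt (by linarith)
  have ht0 : 0 ≤ t := Real.sqrt_nonneg _
  have hA2 : 2 ≤ A := sqrt9_ge w hw1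
  have htA : t ≤ A := by nlinarith [Real.sq_sqrt (show (0:ℝ) ≤ 9 - w by linarith)]
  rw [psi, ← ht, ← hA, div_le_iff₀ (by linarith)]
  nlinarith [pow_le_pow_left₀ ht0 htA 3, sq_nonneg t]

lemma phi_le_one (w : ℝ) (hw0 : 0 ≤ w) (hw1 : w ≤ 1) : phi w ≤ 1 := by
  have := psi_le w hw0 hw1; rw [phi]; linarith

lemma phi_ge_half (w : ℝ) (hw0 : 0 ≤ w) (hw1 : w ≤ 1) : 1/2 ≤ phi w := by
  rcases le_or_gt (1/2 : ℝ) w with h | h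
  · have := psi_nonneg w hw1; rw [phi]; linarith
  · set t := Real.sqrt (1 - w) with ht
    set A := Real.sqrt (9 - w) with hA
    have ht2 : t ^ 2 = 1 - w := Real.sq_sqrt (by linarith)
    have ht0 : 0 ≤ t := Real.sqrt_nonneg _
    have ht1 : t ≤ 1 := sqrt1_le w hw0
    have hA3 : A ≤ 3 := sqrt9_le w hw0
    have hA2 : 2 ≤ A := sqrt9_ge w hw1
    rw [phi, psi, ← ht, ← hA]
    have hd : (0:ℝ) < A + 3 * t := by linarith
    rw [show (1:ℝ)/2 = w + (1/2 - w) by ring]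
    have : (1/2 - w) ≤ 4 * t ^ 3 / (A + 3 * t) := by
      rw [le_div_iff₀ hd]
      nlinarith [mul_nonneg (mul_nonneg (sub_nonneg.2 ht1)
        (show (0:ℝ) ≤ t + 1/2 by linarith)) (show (0:ℝ) ≤ 1/2 - w by linarith),
        sq_nonneg t, mul_nonneg ht0 ht0]
    linarith
set_option maxHeartbeats 1000000
lemma psi_anti (u v : ℝ) (hu0 : 0 ≤ u) (hv1 : v ≤ 1) (huv : u ≤ v) : psi v ≤ psi u := by
  set a := Real.sqrt (1 - v) with ha
  set b := Real.sqrt (1 - u) with hb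
  set A := Real.sqrt (9 - v) with hA
  set B := Real.sqrt (9 - u) with hB
  have ha2 : a ^ 2 = 1 - v := Real.sq_sqrt (by linarith)
  have hb2 : b ^ 2 = 1 - u := Real.sq_sqrt (by linarith)
  have hA2 : A ^ 2 = 9 - v := Real.sq_sqrt (by linarith)
  have hB2 : B ^ 2 = 9 - u := Real.sq_sqrt (by linarith)
  have ha0 : 0 ≤ a := Real.sqrt_nonneg _
  have hb0 : 0 ≤ b := Real.sqrt_nonneg _
  have hA0 : 0 ≤ A := Real.sqrt_nonneg _
  have hB0 : 0 ≤ B := Real.sqrt_nonneg _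
  have hab : a ≤ b := Real.sqrt_le_sqrt (by linarith)
  have hBA : A ≤ B := Real.sqrt_le_sqrt (by linarith)
  have hA2' : 2 ≤ A := by nlinarith
  have hB2' : 2 ≤ B := by nlinarith
  have hA2a : A ^ 2 = 8 + a ^ 2 := by rw [hA2]; linarith
  have hB2b : B ^ 2 = 8 + b ^ 2 := by rw [hB2]; linarith
  have hp2 : a ^ 2 ≤ b ^ 2 := by nlinarith
  have hp4 : a ^ 4 ≤ b ^ 4 := by nlinarith
  have hp6 : a ^ 6 ≤ b ^ 6 := by nlinarith [mul_le_mul hp2 hp4 (by positivity) (by positivity)]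
  have key : a ^ 3 * B ≤ b ^ 3 * A := by
    have h1 : 0 ≤ a ^ 3 * B := by positivity
    have h2 : (a ^ 3 * B) ^ 2 ≤ (b ^ 3 * A) ^ 2 := by
      have hh : 0 ≤ a^2 * b^2 * (b^4 - a^4) := by
        apply mul_nonneg (by positivity); linarith
      calc (a ^ 3 * B) ^ 2 = a^6 * (8 + b^2) := by rw [← hB2b]; ring
        _ ≤ b^6 * (8 + a^2) := by nlinarith
        _ = (b ^ 3 * A) ^ 2 := by rw [← hA2a]; ring
    calc a ^ 3 * B = Real.sqrt ((a ^ 3 * B) ^ 2) := (Real.sqrt_sq h1).symm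
      _ ≤ Real.sqrt ((b ^ 3 * A) ^ 2) := Real.sqrt_le_sqrt h2
      _ = b ^ 3 * A := Real.sqrt_sq (by positivity)
  have key2 : 0 ≤ a * b * (b^2 - a^2) := mul_nonneg (mul_nonneg ha0 hb0) (by linarith)
  rw [psi, psi, ← ha, ← hb, ← hA, ← hB,
    div_le_div_iff₀ (by linarith) (by linarith)]
  linarith [key, key2]

lemma phi_mono (u v : ℝ) (hu0 : 0 ≤ u) (hv1 : v ≤ 1) (huv : u ≤ v) : phi u ≤ phi v := by
  set a := Real.sqrt (1 - v) with ha
  set b := Real.sqrt (1 - u) with hb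
  set A := Real.sqrt (9 - v) with hA
  set B := Real.sqrt (9 - u) with hB
  have ha2 : a ^ 2 = 1 - v := Real.sq_sqrt (by linarith)
  have hb2 : b ^ 2 = 1 - u := Real.sq_sqrt (by linarith)
  have hA2 : A ^ 2 = 9 - v := Real.sq_sqrt (by linarith)
  have hB2 : B ^ 2 = 9 - u := Real.sq_sqrt (by linarith)
  have ha0 : 0 ≤ a := Real.sqrt_nonneg _
  have hb0 : 0 ≤ b := Real.sqrt_nonneg _
  have hA0 : 0 ≤ A := Real.sqrt_nonneg _
  have hb1 : b ≤ 1 := by nlinarith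
  have ha1 : a ≤ 1 := by nlinarith
  have hab : a ≤ b := Real.sqrt_le_sqrt (by linarith)
  have hBA : A ≤ B := Real.sqrt_le_sqrt (by linarith)
  have hA2' : 2 ≤ A := by nlinarith
  have hB2' : 2 ≤ B := by nlinarith
  have hA3 : A ≤ 3 := by nlinarith
  have hAB8 : 8 + a * b ≤ A * B := by
    have h1 : 0 ≤ 8 + a * b := by positivity
    have h2 : (8 + a * b) ^ 2 ≤ (A * B) ^ 2 := by nlinarith [sq_nonneg (a - b)]
    calc 8 + a * b = Real.sqrt ((8 + a * b) ^ 2) := (Real.sqrt_sq h1).symm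
      _ ≤ Real.sqrt ((A * B) ^ 2) := Real.sqrt_le_sqrt h2
      _ = A * B := Real.sqrt_sq (by positivity)
  rw [phi, phi]
  have hvu : v - u = b ^ 2 - a ^ 2 := by rw [ha2, hb2]; ring
  have hba0 : 0 ≤ b - a := by linarith
  have hab1 : a * b ≤ 1 := by nlinarith
  have hAB6 : 6 ≤ A * B - 3 * (a*b) := by linarith
  have main : 4 * b^3 * (A + 3*a) - 4 * a^3 * (B + 3*b) ≤ (b^2 - a^2) * ((A + 3*a) * (B + 3*b)) := by
    have e1 : 0 ≤ (B - A) * (a * (a^2 + 3*b^2)) := by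
      apply mul_nonneg (by linarith)
      positivity
    have e2 : A * (b - a)^3 ≤ (b - a) * (a + b) * (A * B - 3 * (a*b)) := by
      have p1 : 0 ≤ (3 - A) * ((b-a)*(b-a)*(b-a)) :=
        mul_nonneg (by linarith) (by positivity)
      have p2 : 0 ≤ 3 * ((b-a)*(b-a)*a) := by positivity
      have p3 : 0 ≤ 3 * ((b-a)*b*(1-(b-a))) :=
        mul_nonneg (by norm_num) (mul_nonneg (mul_nonneg hba0 hb0) (by linarith))
      have p4 : 0 ≤ (b-a)*(6*a+3*b) := mul_nonneg hba0 (by linarith)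
      have p5 : (b - a) * (a + b) * 6 ≤ (b - a) * (a + b) * (A * B - 3 * (a*b)) :=
        mul_le_mul_of_nonneg_left hAB6 (by positivity)
      calc A * (b - a)^3 ≤ 3 * ((b-a)*(b-a)*(b-a)) := by linarith
        _ ≤ 3 * ((b-a)*(b-a)*b) := by linarith
        _ ≤ 3 * ((b-a)*1*b) := by nlinarith [mul_nonneg hba0 hb0]
        _ ≤ (b - a) * (a + b) * 6 := by linarith
        _ ≤ (b - a) * (a + b) * (A * B - 3 * (a*b)) := p5
    linarith [e1, e2]
  have hd1 : (0:ℝ) < A + 3*a := by linarith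
  have hd2 : (0:ℝ) < B + 3*b := by linarith
  have hpsi : psi u - psi v ≤ b^2 - a^2 := by
    rw [psi, psi, ← ha, ← hb, ← hA, ← hB]
    rw [div_sub_div _ _ (by linarith) (by linarith), div_le_iff₀ (by positivity)]
    linarith [main]
  linarith [hpsi, hvu.ge, hvu.le]
lemma phi_fe (w : ℝ) (hw0 : 0 ≤ w) (hw1 : w ≤ 1) :
    phi (phi w) = 6 - w - phi w - 3 / (phi w) := by
  set t := Real.sqrt (1 - w) with htdef
  set A := Real.sqrt (9 - w) with hAdef
  have ht2 : t ^ 2 = 1 - w := Real.sq_sqrt (by linarith)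
  have hA2 : A ^ 2 = 9 - w := Real.sq_sqrt (by linarith)
  have ht0 : 0 ≤ t := Real.sqrt_nonneg _
  have ht1 : t ≤ 1 := by nlinarith
  have hA0 : 0 ≤ A := Real.sqrt_nonneg _
  have hA2' : 2 ≤ A := by nlinarith
  have hA8 : A ^ 2 = 8 + t ^ 2 := by rw [hA2]; linarith
  have hw : w = 1 - t ^ 2 := by linarith
  have hd : (0:ℝ) < A + 3 * t := by linarith
  have hd1 : (0:ℝ) < A + t := by linarith
  have hd5 : (0:ℝ) < A + 5 * t := by linarith
  have hy : phi w = (A * (1 - t^2) + t * (3 + t^2)) / (A + 3*t) := by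
    rw [phi, psi, ← htdef, ← hAdef, hw]
    field_simp
    ring
  have h1y : 1 - phi w = 8 * t^2 / ((A + t) * (A + 3*t)) := by
    rw [hy]; field_simp; linear_combination t^2 * hA8
  have h9y : 9 - phi w = 8 * (A + 2*t)^2 / ((A + t) * (A + 3*t)) := by
    rw [hy]; field_simp; linear_combination t^2 * hA8
  set C := Real.sqrt ((A + t) * (A + 3*t)) with hCdef
  have hC2 : C ^ 2 = (A + t) * (A + 3*t) := Real.sq_sqrt (by positivity)
  have hC0 : 0 < C := Real.sqrt_pos.2 (by positivity)
  set s8 := Real.sqrt 8 with hs8def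
  have hs82 : s8 ^ 2 = 8 := Real.sq_sqrt (by norm_num)
  have hs80 : 0 < s8 := Real.sqrt_pos.2 (by norm_num)
  have hs1y : Real.sqrt (1 - phi w) = s8 * t / C := by
    rw [h1y, show 8 * t^2 / ((A + t) * (A + 3*t)) = (s8 * t / C)^2 by
      rw [div_pow, mul_pow, hs82, hC2]]
    exact Real.sqrt_sq (by positivity)
  have hs9y : Real.sqrt (9 - phi w) = s8 * (A + 2*t) / C := by
    rw [h9y, show 8 * (A + 2*t)^2 / ((A + t) * (A + 3*t)) = (s8 * (A + 2*t) / C)^2 by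
      rw [div_pow, mul_pow, hs82, hC2]]
    exact Real.sqrt_sq (by positivity)
  have hpsiy : psi (phi w) = 32 * t^3 / ((A + t) * (A + 3*t) * (A + 5*t)) := by
    rw [psi, hs1y, hs9y]
    rw [div_eq_div_iff (by positivity) (by positivity)]
    field_simp
    linear_combination (4*t^3*((A+t)*(A+3*t)*(A+5*t))) * hs82 - 32*t^3*(A+5*t) * hC2
  -- final identity
  have hy2 : phi w ≠ 0 := by
    rw [hy]
    have : 0 < A * (1 - t^2) + t * (3 + t^2) := by nlinarith
    positivity
  have hnumpos : 0 < A * (1 - t^2) + t * (3 + t^2) := by nlinarith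
  have hnum : A - A*t^2 + t*3 + t^3 ≠ 0 := by nlinarith
  rw [show phi (phi w) = phi w + psi (phi w) from rfl, hpsiy, hy, hw]
  field_simp [hnum]
  linear_combination (3*A^2*t^4 + 16*A*t^5 - 4*A*t^3 + 5*t^6 - 12*t^4) * hA8
lemma phi_zero : phi 0 = 2/3 := by
  have h9 : Real.sqrt (9 - 0) = 3 := by
    rw [show (9:ℝ) - 0 = 3^2 by norm_num, Real.sqrt_sq (by norm_num)]
  have h1 : Real.sqrt (1 - 0) = 1 := by
    rw [show (1:ℝ) - 0 = 1 by norm_num, Real.sqrt_one]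
  rw [phi, psi, h9, h1]
  norm_num

lemma phi_formula (z : ℝ) (hz0 : 0 < z) (hz1 : z ≤ 1) :
    phi z = (-z^2 + 6*z - 3 + Real.sqrt (9 - z) * (1 - z) ^ ((3:ℝ)/2)) / (2*z) := by
  set t := Real.sqrt (1 - z) with htdef
  set A := Real.sqrt (9 - z) with hAdef
  have ht2 : t ^ 2 = 1 - z := Real.sq_sqrt (by linarith)
  have hA2 : A ^ 2 = 9 - z := Real.sq_sqrt (by linarith)
  have ht0 : 0 ≤ t := Real.sqrt_nonneg _
  have hA0 : 0 ≤ A := Real.sqrt_nonneg _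
  have hA2' : 2 ≤ A := by nlinarith
  have hd : (0:ℝ) < A + 3 * t := by linarith
  have h1z : (0:ℝ) ≤ 1 - z := by linarith
  have h32 : (1 - z) ^ ((3:ℝ)/2) = t^3 := by
    rw [show ((3:ℝ)/2) = (3:ℝ) * (1/2) by norm_num,
      Real.rpow_mul h1z, ← Real.sqrt_eq_rpow,
      show ((1:ℝ)-z)^(3:ℝ) = (1-z)^(3:ℕ) from Real.rpow_natCast _ 3,
      show (1-z)^(3:ℕ) = (t^3)^2 by rw [show (t^3)^2 = (t^2)^3 by ring, ht2]]
    exact Real.sqrt_sq (by positivity)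
  rw [phi, psi, ← htdef, ← hAdef, h32]
  field_simp
  linear_combination (-t^3) * hA2 + (-9*t + 9*t*z - 3*A + 3*A*z - 3*A*t^2) * ht2

lemma phi_lip (u v : ℝ) (hu0 : 0 ≤ u) (hu1 : u ≤ 1) (hv0 : 0 ≤ v) (hv1 : v ≤ 1) :
    |phi u - phi v| ≤ |u - v| := by
  rcases le_total u v with h | h
  · have h1 := phi_mono u v hu0 hv1 h
    have h2 := psi_anti u v hu0 hv1 h
    rw [abs_of_nonpos (by linarith), abs_of_nonpos (by linarith)]
    rw [phi, phi] at h1 ⊢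
    linarith
  · have h1 := phi_mono v u hv0 hu1 h
    have h2 := psi_anti v u hv0 hu1 h
    rw [abs_of_nonneg (by linarith), abs_of_nonneg (by linarith)]
    rw [phi, phi] at h1 ⊢
    linarith

/-- Uniqueness of the measurable solution on `[0,1]` of the functional equation
`G(z) = 3 / (6 − z − G(z) − G(G(z)))`: any such solution is the explicit function `g₂`. -/
theorem g2_uniqueness (G : Set.Icc (0 : ℝ) 1 → Set.Icc (0 : ℝ) 1) (hG : Measurable G)
    (hfe : ∀ z : Set.Icc (0 : ℝ) 1,
      (G z : ℝ) = 3 / (6 - (z : ℝ) - (G z : ℝ) - (G (G z) : ℝ))) :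
    (G ⟨0, by norm_num⟩ : ℝ) = 2 / 3 ∧
    ∀ z : Set.Icc (0 : ℝ) 1, (0 : ℝ) < (z : ℝ) →
      (G z : ℝ)
        = (-(z : ℝ) ^ 2 + 6 * (z : ℝ) - 3
            + Real.sqrt (9 - (z : ℝ)) * (1 - (z : ℝ)) ^ ((3 : ℝ) / 2))
          / (2 * (z : ℝ)) := by
  have hdenom : ∀ z : Set.Icc (0 : ℝ) 1,
      3 ≤ 6 - (z : ℝ) - (G z : ℝ) - (G (G z) : ℝ) ∧
      6 - (z : ℝ) - (G z : ℝ) - (G (G z) : ℝ) ≤ 6 := by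
    intro z
    have h1 := z.2.1; have h2 := z.2.2
    have h3 := (G z).2.1; have h4 := (G z).2.2
    have h5 := (G (G z)).2.1; have h6 := (G (G z)).2.2
    constructor <;> linarith
  have hGhalf : ∀ z : Set.Icc (0 : ℝ) 1, 1/2 ≤ (G z : ℝ) := by
    intro z
    obtain ⟨hd3, hd6⟩ := hdenom z
    rw [hfe z, le_div_iff₀ (by linarith)]
    linarith
  have hfe' : ∀ z : Set.Icc (0 : ℝ) 1,
      (G (G z) : ℝ) = 6 - (z : ℝ) - (G z : ℝ) - 3 / (G z : ℝ) := by
    intro z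
    obtain ⟨hd3, hd6⟩ := hdenom z
    have hGz : (G z : ℝ) ≠ 0 := by have := hGhalf z; linarith
    have hDne : (6 - (z : ℝ) - (G z : ℝ) - (G (G z) : ℝ)) ≠ 0 := by linarith
    have h2 : (G z : ℝ) * (6 - (z : ℝ) - (G z : ℝ) - (G (G z) : ℝ)) = 3 :=
      (eq_div_iff hDne).1 (hfe z)
    have h4 : 3 / (G z : ℝ) = 6 - (z : ℝ) - (G z : ℝ) - (G (G z) : ℝ) := by
      rw [div_eq_iff hGz]
      linear_combination -h2
    linarith
  have key : ∀ z : Set.Icc (0 : ℝ) 1, (G z : ℝ) = phi z := by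
    by_contra hcon
    push_neg at hcon
    obtain ⟨z0, hz0⟩ := hcon
    set o : ℕ → Set.Icc (0 : ℝ) 1 := fun n => G^[n] z0 with hodef
    have ho : ∀ n, o (n+1) = G (o n) := fun n => Function.iterate_succ_apply' G n z0
    set δ : ℕ → ℝ := fun n => ((o (n+1) : ℝ)) - phi ((o n : ℝ)) with hδdef
    have hδ : ∀ m, δ m = ((o (m+1) : ℝ)) - phi ((o m : ℝ)) := fun m => rfl
    set c : ℝ := |δ 0| with hcdef
    have ho0 : o 0 = z0 := rfl
    have hc0 : 0 < c := by
      rw [hcdef]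
      apply abs_pos.2
      rw [hδ 0, ho0, show o 1 = G z0 by rw [ho 0, ho0]]
      exact sub_ne_zero.2 hz0
    have grow : ∀ n, c * (1+c)^n ≤ |δ n| := by
      intro n
      induction n with
      | zero => simpa using hcdef.le
      | succ n ih =>
        set x := phi ((o n : ℝ)) with hxdef
        set y := ((o (n+1) : ℝ)) with hydef
        have hon0 : (0:ℝ) ≤ (o n : ℝ) := (o n).2.1
        have hon1 : ((o n : ℝ)) ≤ 1 := (o n).2.2
        have hx1 : x ≤ 1 := phi_le_one _ hon0 hon1
        have hxh : 1/2 ≤ x := phi_ge_half _ hon0 hon1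
        have hy1 : y ≤ 1 := (o (n+1)).2.2
        have hyh : 1/2 ≤ y := by
          rw [hydef, ho n]; exact hGhalf (o n)
        have hδn : δ n = y - x := rfl
        set d := c * (1+c)^n with hddef
        have hd0 : 0 < d := by positivity
        have hdc : c ≤ d := by
          have h1 : (1:ℝ) ≤ (1+c)^n := one_le_pow₀ (by linarith)
          nlinarith
        have hdy : d ≤ |y - x| := by rw [← hδn]; exact ih
        have hxy1 : x * y ≤ 1 - d := by
          rcases le_total x y with h | h
          · have h2 : d ≤ y - x := by rwa [abs_of_nonneg (by linarith)] at hdy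
            nlinarith
          · have h2 : d ≤ x - y := by
              rw [abs_of_nonpos (by linarith)] at hdy; linarith
            nlinarith
        have hxypos : 0 < x * y := by nlinarith
        have hfac : 3 + 3*d ≤ 3 / (x*y) := by
          rw [le_div_iff₀ hxypos]; nlinarith
        have hxne : x ≠ 0 := by linarith
        have hyne : y ≠ 0 := by linarith
        have h3 : ((G (o n) : ℝ)) = y := by rw [hydef, ho n]
        have hGGn : ((o (n+2) : ℝ)) = 6 - ((o n : ℝ)) - y - 3 / y := by
          have h2 : ((o (n+2) : ℝ)) = ((G (G (o n)) : ℝ)) := by rw [ho (n+1), ho n]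
          rw [h2, hfe' (o n), h3]
        have hphix : phi x = 6 - ((o n : ℝ)) - x - 3 / x := by
          rw [hxdef]; exact phi_fe _ hon0 hon1
        have hid : δ (n+1) = (phi x - phi y) + (y - x) * (3/(x*y) - 1) := by
          rw [hδ (n+1), hGGn, ← hydef, hphix]
          field_simp
          ring
        have hF0 : (0:ℝ) ≤ 3/(x*y) - 1 := by nlinarith
        have hlip : |phi y - phi x| ≤ |y - x| := phi_lip y x (by linarith) hy1 (by linarith) hx1
        have habs : |y - x| * (3/(x*y) - 1) - |y - x| ≤ |δ (n+1)| := by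
          have h1 : |(y-x) * (3/(x*y) - 1)| = |y-x| * (3/(x*y) - 1) := by
            rw [abs_mul, abs_of_nonneg hF0]
          have h2 : |(y-x)*(3/(x*y)-1)| ≤ |δ (n+1)| + |phi y - phi x| := by
            calc |(y-x)*(3/(x*y)-1)| = |δ (n+1) + (phi y - phi x)| := by rw [hid]; ring_nf
              _ ≤ |δ (n+1)| + |phi y - phi x| := abs_add_le _ _
          linarith [h1 ▸ h2, hlip]
        calc c * (1+c)^(n+1) = d * (1 + c) := by rw [hddef]; ring
          _ ≤ |y - x| * ((3/(x*y) - 1) - 1) := by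
              nlinarith [mul_le_mul hdy (show (1:ℝ) + c ≤ (3/(x*y) - 1) - 1 by nlinarith)
                (by linarith) (abs_nonneg (y - x))]
          _ ≤ |δ (n+1)| := by nlinarith [habs, abs_nonneg (y - x)]
    obtain ⟨n, hn⟩ := exists_nat_gt (1/c^2)
    have hpow : 1 + (n:ℝ) * c ≤ (1+c)^n := by
      have h := one_add_mul_le_pow (show (-2:ℝ) ≤ c by linarith) n
      linarith
    have hδn1 : |δ n| ≤ 1 := by
      have hon0 : (0:ℝ) ≤ (o n : ℝ) := (o n).2.1
      have hon1 : ((o n : ℝ)) ≤ 1 := (o n).2.2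
      have hx1 : phi ((o n : ℝ)) ≤ 1 := phi_le_one _ hon0 hon1
      have hxh : 1/2 ≤ phi ((o n : ℝ)) := phi_ge_half _ hon0 hon1
      have hy0 : (0:ℝ) ≤ ((o (n+1) : ℝ)) := (o (n+1)).2.1
      have hy1 : ((o (n+1) : ℝ)) ≤ 1 := (o (n+1)).2.2
      rw [hδ n]
      rw [abs_le]
      constructor <;> linarith
    have h1 : 1 < c * (1+c)^n := by
      have hnc : 1 < (n:ℝ) * c^2 := by
        calc (1:ℝ) = (1/c^2) * c^2 := by field_simp
          _ < (n:ℝ) * c^2 := by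
              apply mul_lt_mul_of_pos_right hn (by positivity)
      nlinarith
    linarith [grow n, hδn1]
  constructor
  · rw [key ⟨0, by norm_num⟩]
    simpa using phi_zero
  · intro z hz
    rw [key z]
    exact phi_formula z hz z.2.2

end VEP
end

section
/- Let G : [0,1] → [0,1] be a measurable function satisfying G(z) = (1/4)·(1+z)·(1 + G(G(z))) for every z ∈ [0,1]. Then for every z ∈ [0,1], G(z) = (−z² + 16z − 3 + √(49−z)·(1−z)^{3/2}) / (2(z+5)). -/
namespace VEP

/-- `sx z = √((49-z)(1-z))`. -/
noncomputable def sx (z : ℝ) : ℝ := Real.sqrt ((49 - z) * (1 - z))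

/-- The explicit solution, in the convenient form `g z = 1 - 12(1-z)/(13-z+sx z)`. -/
noncomputable def g (z : ℝ) : ℝ := 1 - 12 * (1 - z) / (13 - z + sx z)

lemma sx_nonneg (z : ℝ) : 0 ≤ sx z := Real.sqrt_nonneg _

lemma sx_sq {z : ℝ} (h1 : z ≤ 1) : sx z ^ 2 = (49 - z) * (1 - z) :=
  Real.sq_sqrt (by nlinarith)

lemma sx_eq {z : ℝ} (h1 : z ≤ 1) :
    sx z = Real.sqrt (49 - z) * Real.sqrt (1 - z) :=
  Real.sqrt_mul (by linarith) _

lemma sqrt49_ge {z : ℝ} (h1 : z ≤ 1) : 6 ≤ Real.sqrt (49 - z) := by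
  rw [show (6:ℝ) = Real.sqrt 36 by
    rw [show (36:ℝ) = 6^2 by norm_num, Real.sqrt_sq]; norm_num]
  exact Real.sqrt_le_sqrt (by linarith)

lemma sx_ge {z : ℝ} (h1 : z ≤ 1) : 6 * Real.sqrt (1 - z) ≤ sx z := by
  rw [sx_eq h1]
  exact mul_le_mul_of_nonneg_right (sqrt49_ge h1) (Real.sqrt_nonneg _)

lemma D_ge {z : ℝ} (h1 : z ≤ 1) : 12 ≤ 13 - z + sx z := by
  have := sx_nonneg z; linarith

lemma D_pos {z : ℝ} (h1 : z ≤ 1) : 0 < 13 - z + sx z := by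
  have := D_ge h1; linarith

lemma g_mem {z : ℝ} (h0 : 0 ≤ z) (h1 : z ≤ 1) : 0 ≤ g z ∧ g z ≤ 1 := by
  have hD := D_pos h1
  have hD12 := D_ge h1
  have hnum : 0 ≤ 12 * (1 - z) := by linarith
  constructor
  · have : 12 * (1 - z) / (13 - z + sx z) ≤ 1 := by
      rw [div_le_one hD]; linarith
    unfold g; linarith
  · have : 0 ≤ 12 * (1 - z) / (13 - z + sx z) := div_nonneg hnum hD.le
    unfold g; linarith

/-- The functional equation satisfied by `g`. -/
lemma g_fe {z : ℝ} (h0 : 0 ≤ z) (h1 : z ≤ 1) :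
    g (g z) = 4 * g z / (1 + z) - 1 := by
  set S := sx z with hS
  have hS2 : S ^ 2 = (49 - z) * (1 - z) := sx_sq h1
  have hS0 : 0 ≤ S := sx_nonneg z
  have hD : (0:ℝ) < 13 - z + S := D_pos h1
  have hz5 : (0:ℝ) < z + 5 := by linarith
  have hz1 : (0:ℝ) < 1 + z := by linarith
  -- conjugate form of 1 - g z
  have ht : 12 * (1 - z) / (13 - z + S) = (1 - z) * (13 - z - S) / (2 * (z + 5)) := by
    rw [div_eq_div_iff hD.ne' (by linarith)]
    linear_combination (1 - z) * hS2
  have hgz : g z = 1 - (1 - z) * (13 - z - S) / (2 * (z + 5)) := by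
    rw [g, ← hS, ht]
  -- nonnegativity of the numerator of sx (g z)
  have hE0 : 0 ≤ z ^ 2 + 22 * z - 23 + (11 + z) * S := by
    have hsq : ((1 - z) * (23 + z)) ^ 2 ≤ ((11 + z) * S) ^ 2 := by
      nlinarith [hS2, sq_nonneg (1 - z), sq_nonneg z]
    have h1' : 0 ≤ (1 - z) * (23 + z) := by nlinarith
    have h2' : 0 ≤ (11 + z) * S := by positivity
    nlinarith [hsq]
  have hE0' : 0 ≤ (z ^ 2 + 22 * z - 23 + (11 + z) * S) / (2 * (z + 5)) :=
    div_nonneg hE0 (by linarith)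
  -- the value of sx (g z)
  have hsgz : sx (g z) = (z ^ 2 + 22 * z - 23 + (11 + z) * S) / (2 * (z + 5)) := by
    rw [sx]
    have key : (49 - g z) * (1 - g z)
        = ((z ^ 2 + 22 * z - 23 + (11 + z) * S) / (2 * (z + 5))) ^ 2 := by
      rw [hgz]
      field_simp
      linear_combination (-120 - 24*z) * hS2
    rw [key, Real.sqrt_sq hE0']
  -- the denominator simplifies to z + 11 + S
  have hden : 13 - g z + sx (g z) = z + 11 + S := by
    rw [hsgz, hgz]
    field_simp
    ring
  have h11 : (0:ℝ) < z + 11 + S := by linarith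
  rw [g, hden, hgz]
  field_simp
  linear_combination (-4 + 4*z) * hS2

set_option maxHeartbeats 1000000 in
/-- Monotone difference bound for `g` (case `y ≤ x`). -/
lemma g_lip_aux {x y : ℝ} (hy0 : 0 ≤ y) (hxy : y ≤ x) (hx1 : x ≤ 1) :
    0 ≤ g x - g y ∧ g x - g y ≤ (1 - Real.sqrt (1 - y) / 8) * (x - y) := by
  have hy1 : y ≤ 1 := le_trans hxy hx1
  set u := Real.sqrt (1 - x) with hu
  set v := Real.sqrt (1 - y) with hv
  set px := Real.sqrt (49 - x) with hpx
  set py := Real.sqrt (49 - y) with hpy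
  have hu2 : u ^ 2 = 1 - x := Real.sq_sqrt (by linarith)
  have hv2 : v ^ 2 = 1 - y := Real.sq_sqrt (by linarith)
  have hpx2 : px ^ 2 = 49 - x := Real.sq_sqrt (by linarith)
  have hpy2 : py ^ 2 = 49 - y := Real.sq_sqrt (by linarith)
  have hu0 : 0 ≤ u := Real.sqrt_nonneg _
  have hv0 : 0 ≤ v := Real.sqrt_nonneg _
  have hpx6 : 6 ≤ px := sqrt49_ge hx1
  have hpy6 : 6 ≤ py := sqrt49_ge hy1
  have huv : u ≤ v := Real.sqrt_le_sqrt (by linarith)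
  have hv1 : v ≤ 1 := by nlinarith [hv2, hv0]
  have hsx : sx x = px * u := by rw [sx, Real.sqrt_mul (by linarith)]
  have hsy : sx y = py * v := by rw [sx, Real.sqrt_mul (by linarith)]
  have hDx : (0:ℝ) < 13 - x + sx x := D_pos hx1
  have hDy : (0:ℝ) < 13 - y + sx y := D_pos hy1
  have hDxge : 12 + 6 * u ≤ 13 - x + sx x := by rw [hsx]; nlinarith [hu2, hpx6, hu0]
  have hDyge : 12 + 6 * v ≤ 13 - y + sx y := by rw [hsy]; nlinarith [hv2, hpy6, hv0]
  set Q := v * px - u * py with hQ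
  set r := v * px + u * py with hr
  have hqr : Q * r = 48 * (x - y) := by
    rw [hQ, hr]
    linear_combination px ^ 2 * hv2 + (1 - y) * hpx2 - py ^ 2 * hu2 - (1 - x) * hpy2
  clear_value u v px py Q r
  rcases eq_or_lt_of_le hv0 with hv00 | hvpos
  · -- v = 0, so x = y = 1
    have hy' : y = 1 := by nlinarith [hv2]
    have hx' : x = 1 := by linarith
    subst hx'; subst hy'
    constructor <;> simp
  · have hr6 : 6 * u + 6 * v ≤ r := by nlinarith [hpx6, hpy6, hu0, hv0]
    have hr0 : 0 < r := by nlinarith [hpy6, hu0]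
    have hq0 : 0 ≤ Q := by
      by_contra hcon
      push_neg at hcon
      nlinarith [hqr, mul_pos (neg_pos.2 hcon) hr0]
    have h1 : 0 ≤ u * (x - y) * (r - 6 * v) :=
      mul_nonneg (mul_nonneg hu0 (by linarith)) (by linarith)
    have h2 : (u * v * Q) * r = 48 * (u * v) * (x - y) := by linear_combination u * v * hqr
    have h3 : 48 * (u * v) * (x - y) ≤ (8 * u * (x - y)) * r := by nlinarith [h1]
    have h4 : u * v * Q ≤ 8 * u * (x - y) := by
      have := h2.le.trans h3
      exact le_of_mul_le_mul_right this hr0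
    have hNid : (1 - y) * sx x - (1 - x) * sx y = u * v * Q := by
      rw [hsx, hsy, hQ]
      linear_combination (-(px * u)) * hv2 + py * v * hu2
    have key : (g x - g y) * ((13 - x + sx x) * (13 - y + sx y))
        = 12 * (12 * (x - y) + u * v * Q) := by
      rw [g, g]
      field_simp
      ring_nf
      linear_combination 12 * hNid
    have hgd0 : 0 ≤ g x - g y := by
      have huvQ : 0 ≤ u * v * Q := mul_nonneg (mul_nonneg hu0 hv0) hq0
      have hnum : 0 ≤ 12 * (12 * (x - y) + u * v * Q) := by linarith [huvQ]
      by_contra hc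
      push_neg at hc
      have h2 := mul_neg_of_neg_of_pos hc (mul_pos hDx hDy)
      rw [key] at h2
      linarith
    refine ⟨hgd0, ?_⟩
    have hxy0 : (0:ℝ) ≤ x - y := by linarith
    have hv8 : (0:ℝ) ≤ 1 - v / 8 := by linarith
    have hb1 : 144 + 96 * u ≤ (1 - v / 8) * ((12 + 6 * u) * (12 + 6 * v)) := by
      have w1 : (0:ℝ) ≤ 24 * (v - u) := by linarith
      have w2 : (0:ℝ) ≤ v * (30 - 9 * v) := mul_nonneg hv0 (by linarith)
      have w3 : (0:ℝ) ≤ u * v * (27 - 4.5 * v) :=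
        mul_nonneg (mul_nonneg hu0 hv0) (by linarith)
      nlinarith [w1, w2, w3]
    have hDD : (12 + 6 * u) * (12 + 6 * v) ≤ (13 - x + sx x) * (13 - y + sx y) :=
      mul_le_mul hDxge hDyge (by linarith) (by linarith)
    have c1 : 12 * (12 * (x - y) + u * v * Q) ≤ (144 + 96 * u) * (x - y) := by
      linarith [h4]
    have c2 : (144 + 96 * u) * (x - y)
        ≤ (1 - v / 8) * ((12 + 6 * u) * (12 + 6 * v)) * (x - y) :=
      mul_le_mul_of_nonneg_right hb1 hxy0
    have c3 : (1 - v / 8) * ((12 + 6 * u) * (12 + 6 * v)) * (x - y)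
        ≤ (1 - v / 8) * ((13 - x + sx x) * (13 - y + sx y)) * (x - y) :=
      mul_le_mul_of_nonneg_right (mul_le_mul_of_nonneg_left hDD hv8) hxy0
    have hfin : (g x - g y) * ((13 - x + sx x) * (13 - y + sx y))
        ≤ ((1 - v / 8) * (x - y)) * ((13 - x + sx x) * (13 - y + sx y)) := by
      rw [key]
      linarith [c1, c2, c3]
    exact le_of_mul_le_mul_right hfin (mul_pos hDx hDy)

/-- Lipschitz-type bound for `g` on `[0,1]`. -/
lemma g_lip {x y : ℝ} (hx0 : 0 ≤ x) (hx1 : x ≤ 1) (hy0 : 0 ≤ y) (hy1 : y ≤ 1) :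
    |g x - g y| ≤ (1 - max (Real.sqrt (1 - x)) (Real.sqrt (1 - y)) / 8) * |x - y| := by
  rcases le_total y x with h | h
  · have H := g_lip_aux hy0 h hx1
    have hm : max (Real.sqrt (1 - x)) (Real.sqrt (1 - y)) = Real.sqrt (1 - y) :=
      max_eq_right (Real.sqrt_le_sqrt (by linarith))
    rw [hm, abs_of_nonneg H.1, abs_of_nonneg (by linarith : (0:ℝ) ≤ x - y)]
    exact H.2
  · have H := g_lip_aux hx0 h hy1
    have hm : max (Real.sqrt (1 - x)) (Real.sqrt (1 - y)) = Real.sqrt (1 - x) :=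
      max_eq_left (Real.sqrt_le_sqrt (by linarith))
    rw [hm, abs_sub_comm (g x), abs_sub_comm x,
      abs_of_nonneg H.1, abs_of_nonneg (by linarith : (0:ℝ) ≤ y - x)]
    exact H.2

/-- Bridge to the explicit formula in the theorem statement. -/
lemma g_formula {z : ℝ} (h0 : 0 ≤ z) (h1 : z ≤ 1) :
    g z = (-z ^ 2 + 16 * z - 3
        + Real.sqrt (49 - z) * (1 - z) ^ ((3 : ℝ) / 2)) / (2 * (z + 5)) := by
  have hr : (1 - z) ^ ((3 : ℝ) / 2) = (1 - z) * Real.sqrt (1 - z) := by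
    rcases eq_or_lt_of_le h1 with h | h
    · have hz : (1:ℝ) - z = 0 := by linarith
      rw [hz, Real.sqrt_zero, mul_zero, Real.zero_rpow (by norm_num : ((3:ℝ)/2) ≠ 0)]
    · have hpos : (0:ℝ) < 1 - z := by linarith
      rw [show ((3:ℝ)/2) = 1 + 1/2 by norm_num, Real.rpow_add hpos, Real.rpow_one,
        ← Real.sqrt_eq_rpow]
  rw [hr]
  have hS2 : sx z ^ 2 = (49 - z) * (1 - z) := sx_sq h1
  have hD : (0:ℝ) < 13 - z + sx z := D_pos h1
  have hsxe : Real.sqrt (49 - z) * ((1 - z) * Real.sqrt (1 - z)) = (1 - z) * sx z := by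
    rw [sx_eq h1]; ring
  rw [hsxe, g]
  field_simp
  linear_combination (z - 1) * hS2

set_option maxHeartbeats 1000000 in
/-- Uniqueness of the measurable solution on `[0,1]` of the functional equation
`G(z) = ¼(1+z)(1 + G(G(z)))`: any such solution is the explicit function `g₃`. -/
theorem g3_uniqueness (G : Set.Icc (0 : ℝ) 1 → Set.Icc (0 : ℝ) 1) (hG : Measurable G)
    (hfe : ∀ z : Set.Icc (0 : ℝ) 1,
      (G z : ℝ) = (1 / 4) * (1 + (z : ℝ)) * (1 + (G (G z) : ℝ))) :
    ∀ z : Set.Icc (0 : ℝ) 1,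
      (G z : ℝ)
        = (-(z : ℝ) ^ 2 + 16 * (z : ℝ) - 3
            + Real.sqrt (49 - (z : ℝ)) * (1 - (z : ℝ)) ^ ((3 : ℝ) / 2))
          / (2 * ((z : ℝ) + 5)) := by
  have hGfe : ∀ w : Set.Icc (0:ℝ) 1,
      (G (G w) : ℝ) = 4 * (G w : ℝ) / (1 + (w : ℝ)) - 1 := by
    intro w
    have h1 : (0:ℝ) < 1 + (w : ℝ) := by have := w.2.1; linarith
    have h := hfe w
    rw [eq_sub_iff_add_eq, eq_div_iff h1.ne']
    linear_combination (-4) * h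
  intro z
  set Z : ℕ → Set.Icc (0:ℝ) 1 := fun n => G^[n] z with hZ
  have hZsucc : ∀ n, Z (n + 1) = G (Z n) := fun n => Function.iterate_succ_apply' G n z
  set δ : ℕ → ℝ := fun n => (G (Z n) : ℝ) - g (Z n) with hδ
  have hδbound : ∀ n, |δ n| ≤ 1 := by
    intro n
    have h1 := (G (Z n)).2
    have h2 := g_mem (Z n).2.1 (Z n).2.2
    rw [abs_le]
    constructor
    · have := h1.1; have := h2.2; simp only [hδ]; linarith
    · have := h1.2; have := h2.1; simp only [hδ]; linarith
  have hstep : ∀ n, |δ n| + Real.sqrt |δ n| * |δ n| / 8 ≤ |δ (n + 1)| := by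
    intro n
    have ha0 : (0:ℝ) ≤ (Z n : ℝ) := (Z n).2.1
    have ha1 : ((Z n : ℝ)) ≤ 1 := (Z n).2.2
    have hw0 : (0:ℝ) ≤ (G (Z n) : ℝ) := (G (Z n)).2.1
    have hw1 : ((G (Z n) : ℝ)) ≤ 1 := (G (Z n)).2.2
    obtain ⟨hg0, hg1⟩ := g_mem ha0 ha1
    have e1 : (G (G (Z n)) : ℝ) = 4 * (G (Z n) : ℝ) / (1 + (Z n : ℝ)) - 1 := hGfe (Z n)
    have e2 : g (g (Z n : ℝ)) = 4 * g (Z n : ℝ) / (1 + (Z n : ℝ)) - 1 := g_fe ha0 ha1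
    have hδs : δ (n + 1) = (G (G (Z n)) : ℝ) - g ((G (Z n) : ℝ)) := by
      simp only [hδ, hZsucc n]
    have e3 : δ (n + 1)
        = 4 * δ n / (1 + (Z n : ℝ)) - (g ((G (Z n) : ℝ)) - g (g (Z n : ℝ))) := by
      rw [hδs, e1]
      simp only [hδ]
      rw [e2]
      ring
    have hlip := g_lip hw0 hw1 hg0 hg1
    set M := max (Real.sqrt (1 - (G (Z n) : ℝ))) (Real.sqrt (1 - g (Z n : ℝ))) with hM'
    have habs : |(G (Z n) : ℝ) - g (Z n : ℝ)| = |δ n| := by simp only [hδ]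
    have hM : Real.sqrt |δ n| ≤ M := by
      rcases le_total (g ((Z n : ℝ))) ((G (Z n) : ℝ)) with h | h
      · have h1 : |δ n| = (G (Z n) : ℝ) - g (Z n : ℝ) := by
          simp only [hδ]; exact abs_of_nonneg (by linarith)
        have : Real.sqrt |δ n| ≤ Real.sqrt (1 - g (Z n : ℝ)) :=
          Real.sqrt_le_sqrt (by rw [h1]; linarith)
        exact le_trans this (le_max_right _ _)
      · have h1 : |δ n| = g (Z n : ℝ) - (G (Z n) : ℝ) := by
          simp only [hδ]; rw [abs_sub_comm]; exact abs_of_nonneg (by linarith)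
        have : Real.sqrt |δ n| ≤ Real.sqrt (1 - (G (Z n) : ℝ)) :=
          Real.sqrt_le_sqrt (by rw [h1]; linarith)
        exact le_trans this (le_max_left _ _)
    have hM1 : M ≤ 1 := by
      apply max_le
      · have h9 : Real.sqrt (1 - (G (Z n) : ℝ)) ≤ Real.sqrt 1 :=
          Real.sqrt_le_sqrt (by linarith)
        simpa using h9
      · have h9 : Real.sqrt (1 - g ((Z n : ℝ))) ≤ Real.sqrt 1 :=
          Real.sqrt_le_sqrt (by linarith)
        simpa using h9
    have h6 : |g ((G (Z n) : ℝ)) - g (g ((Z n : ℝ)))| ≤ (1 - M / 8) * |δ n| := by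
      rw [← habs]; exact hlip
    have h4 : 2 * |δ n| ≤ |4 * δ n / (1 + (Z n : ℝ))| := by
      have h1 : (0:ℝ) < 1 + (Z n : ℝ) := by linarith
      rw [abs_div, abs_of_pos h1, le_div_iff₀ h1, abs_mul,
        show |(4:ℝ)| = 4 by norm_num]
      nlinarith [abs_nonneg (δ n)]
    have h5 : |4 * δ n / (1 + (Z n : ℝ))| - |g ((G (Z n) : ℝ)) - g (g ((Z n : ℝ)))|
        ≤ |δ (n + 1)| := by
      rw [e3]; exact abs_sub_abs_le_abs_sub _ _
    have h7 : Real.sqrt |δ n| * |δ n| ≤ M * |δ n| :=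
      mul_le_mul_of_nonneg_right hM (abs_nonneg _)
    nlinarith [h4, h5, h6, h7]
  have hgrow : ∀ n : ℕ, |δ 0| + n * (Real.sqrt |δ 0| * |δ 0| / 8) ≤ |δ n| := by
    intro n
    induction n with
    | zero => simp
    | succ k ih =>
      have h1 := hstep k
      have hc0 : (0:ℝ) ≤ Real.sqrt |δ 0| * |δ 0| / 8 := by positivity
      have hk0 : (0:ℝ) ≤ (k : ℝ) := Nat.cast_nonneg k
      have hmono : |δ 0| ≤ |δ k| := by nlinarith [ih]
      have h2 : Real.sqrt |δ 0| * |δ 0| ≤ Real.sqrt |δ k| * |δ k| :=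
        mul_le_mul (Real.sqrt_le_sqrt hmono) hmono (abs_nonneg _) (Real.sqrt_nonneg _)
      push_cast
      nlinarith [h1, ih, h2]
  have hd0 : |δ 0| = 0 := by
    by_contra hne
    have hdpos : 0 < |δ 0| := lt_of_le_of_ne (abs_nonneg _) (Ne.symm hne)
    have hspos : 0 < Real.sqrt |δ 0| := Real.sqrt_pos.2 hdpos
    have hcpos : 0 < Real.sqrt |δ 0| * |δ 0| / 8 := by positivity
    obtain ⟨n, hn⟩ := exists_nat_gt (1 / (Real.sqrt |δ 0| * |δ 0| / 8))
    have h1 := hgrow n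
    have h2 := hδbound n
    have h3 : 1 < (n : ℝ) * (Real.sqrt |δ 0| * |δ 0| / 8) := by
      rw [← div_lt_iff₀ hcpos]; exact hn
    linarith
  have hGz : (G z : ℝ) = g (z : ℝ) := by
    have h0 : δ 0 = 0 := abs_eq_zero.1 hd0
    have hZ0 : Z 0 = z := rfl
    rw [hδ] at h0
    simp only [hZ0] at h0
    linarith
  rw [hGz, g_formula z.2.1 z.2.2]

end VEP
end
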